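/- arXiv:math/9901159 — 12 statements merged into one kernel-verified Lean document; each statement's English description precedes it below -/
import Mathlib

section
/- Let (n_{ij}) be a family of nonnegative integers indexed by the ordered pairs (i,j) with i ≠ j and i, j ∈ {0,…,d}, define μ : {0,…,d} → ℤ by μ(k) = Σ_{j≠k} n_{kj} − Σ_{i≠k} n_{ik}, and set A := {i : n_{ij} > 0 for some j} and B := {j : n_{ij} > 0 for some i}. Then Σ_{i≠j} n_{ij} = Σ_{k : μ(k)>0} μ(k) if and only if A ∩ B = ∅. -/
/-- With μ the weight of the family (n_{ij})_{i≠j},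
A := {i : n_{ij} > 0 for some j} and B := {j : n_{ij} > 0 for some i},
the degree Σ_{i≠j} n_{ij} equals d(μ) = Σ_{k : μ(k)>0} μ(k) iff A ∩ B = ∅. -/
theorem stmt_1 (d : ℕ) (hd : 1 ≤ d) (n : Fin (d+1) → Fin (d+1) → ℕ)
    (μ : Fin (d+1) → ℤ)
    (hμ : ∀ k, μ k = (∑ j ∈ Finset.univ.filter (fun j => j ≠ k), (n k j : ℤ)) -
        ∑ i ∈ Finset.univ.filter (fun i => i ≠ k), (n i k : ℤ)) :
    ((∑ i : Fin (d+1), ∑ j ∈ Finset.univ.filter (fun j => j ≠ i), (n i j : ℤ)) =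
        ∑ k ∈ Finset.univ.filter (fun k => 0 < μ k), μ k) ↔
      ({i | ∃ j, j ≠ i ∧ 0 < n i j} ∩ {j | ∃ i, i ≠ j ∧ 0 < n i j}
        = (∅ : Set (Fin (d+1)))) := by
  classical
  set out : Fin (d+1) → ℤ := fun k => ∑ j ∈ Finset.univ.filter (fun j => j ≠ k), (n k j : ℤ)
    with hout
  set inn : Fin (d+1) → ℤ := fun k => ∑ i ∈ Finset.univ.filter (fun i => i ≠ k), (n i k : ℤ)
    with hinn
  have outnn : ∀ k, 0 ≤ out k := fun k => Finset.sum_nonneg fun j _ => Int.natCast_nonneg _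
  have innnn : ∀ k, 0 ≤ inn k := fun k => Finset.sum_nonneg fun i _ => Int.natCast_nonneg _
  have hμ' : ∀ k, μ k = out k - inn k := hμ
  have outzero : ∀ k, out k = 0 ↔ ∀ j, j ≠ k → n k j = 0 := by
    intro k
    rw [hout]
    rw [Finset.sum_eq_zero_iff_of_nonneg (fun j _ => Int.natCast_nonneg _)]
    constructor
    · intro h j hj
      exact_mod_cast h j (by simp [hj])
    · intro h j hj
      simp only [Finset.mem_filter] at hj
      exact_mod_cast h j hj.2
  have innzero : ∀ k, inn k = 0 ↔ ∀ i, i ≠ k → n i k = 0 := by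
    intro k
    rw [hinn]
    rw [Finset.sum_eq_zero_iff_of_nonneg (fun i _ => Int.natCast_nonneg _)]
    constructor
    · intro h i hi
      exact_mod_cast h i (by simp [hi])
    · intro h i hi
      simp only [Finset.mem_filter] at hi
      exact_mod_cast h i hi.2
  -- LHS sum equals ∑ out
  have hD : (∑ i : Fin (d+1), ∑ j ∈ Finset.univ.filter (fun j => j ≠ i), (n i j : ℤ))
      = ∑ k, out k := rfl
  have hswap : (∑ k, inn k) = ∑ k, out k := by
    calc ∑ k, inn k = ∑ k, ∑ i, if i ≠ k then (n i k : ℤ) else 0 := by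
          simp [hinn, Finset.sum_filter]
      _ = ∑ i, ∑ k, if i ≠ k then (n i k : ℤ) else 0 := Finset.sum_comm
      _ = ∑ k, out k := by simp [hout, Finset.sum_filter, ne_comm]
  set P : Finset (Fin (d+1)) := Finset.univ.filter fun k => 0 < μ k with hP
  have hPμ : ∑ k ∈ P, μ k = ∑ k ∈ P, out k - ∑ k ∈ P, inn k := by
    rw [← Finset.sum_sub_distrib]
    exact Finset.sum_congr rfl fun k _ => hμ' k
  have hsplit_out : ∑ k ∈ P, out k + ∑ k ∈ Finset.univ.filter (fun k => ¬ 0 < μ k), out k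
      = ∑ k, out k := Finset.sum_filter_add_sum_filter_not _ _ _
  -- equality ↔ the two error terms vanish
  have key : ((∑ k, out k) = ∑ k ∈ P, μ k) ↔
      (∑ k ∈ Finset.univ.filter (fun k => ¬ 0 < μ k), out k = 0 ∧ ∑ k ∈ P, inn k = 0) := by
    rw [hPμ]
    constructor
    · intro h
      have h2 : ∑ k ∈ Finset.univ.filter (fun k => ¬ 0 < μ k), out k + ∑ k ∈ P, inn k = 0 := by
        omega
      have n1 : 0 ≤ ∑ k ∈ Finset.univ.filter (fun k => ¬ 0 < μ k), out k :=
        Finset.sum_nonneg fun k _ => outnn k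
      have n2 : 0 ≤ ∑ k ∈ P, inn k := Finset.sum_nonneg fun k _ => innnn k
      omega
    · intro ⟨h1, h2⟩
      omega
  have keyC : ((∑ k, out k) = ∑ k ∈ P, μ k) ↔
      ((∀ k, ¬ 0 < μ k → out k = 0) ∧ (∀ k, 0 < μ k → inn k = 0)) := by
    rw [key, Finset.sum_eq_zero_iff_of_nonneg (fun k _ => outnn k),
      Finset.sum_eq_zero_iff_of_nonneg (fun k _ => innnn k)]
    simp [hP]
  -- the disjointness condition
  have hRHS : ({i | ∃ j, j ≠ i ∧ 0 < n i j} ∩ {j | ∃ i, i ≠ j ∧ 0 < n i j}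
      = (∅ : Set (Fin (d+1)))) ↔ ∀ k, out k = 0 ∨ inn k = 0 := by
    rw [Set.eq_empty_iff_forall_notMem]
    constructor
    · intro h k
      by_contra hc
      push_neg at hc
      obtain ⟨h1, h2⟩ := hc
      apply h k
      constructor
      · simp only [Set.mem_setOf_eq]
        by_contra hx
        push_neg at hx
        exact h1 ((outzero k).2 fun j hj => by have := hx j hj; omega)
      · simp only [Set.mem_setOf_eq]
        by_contra hx
        push_neg at hx
        exact h2 ((innzero k).2 fun i hi => by have := hx i hi; omega)
    · intro h k hk
      obtain ⟨⟨j, hj, hj2⟩, ⟨i, hi, hi2⟩⟩ := hk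
      rcases h k with h0 | h0
      · have := (outzero k).1 h0 j hj; omega
      · have := (innzero k).1 h0 i hi; omega
  rw [hD, keyC, hRHS]
  constructor
  · intro ⟨h1, h2⟩ k
    by_cases hk : 0 < μ k
    · exact Or.inr (h2 k hk)
    · exact Or.inl (h1 k hk)
  · intro h
    constructor
    · intro k hk
      rcases h k with h0 | h0
      · exact h0
      · have := hμ' k
        have := outnn k
        omega
    · intro k hk
      rcases h k with h0 | h0
      · have := hμ' k
        have := innnn k
        omega
      · exact h0
end

section
/- For every μ : {0,…,d} → ℤ with Σ_{k=0}^d μ(k) = 0 there exists exactly one family (n_{ij}) of nonnegative integers, indexed by the ordered pairs (i,j) with i ≠ j and i, j ∈ {0,…,d}, such that: (a) μ(k) = Σ_{j≠k} n_{kj} − Σ_{i≠k} n_{ik} for all k; (b) {i : n_{ij} > 0 for some j} ∩ {j : n_{ij} > 0 for some i} = ∅; and (c) any two elements (i,j) and (i′,j′) of the support {(i,j) : n_{ij} > 0} satisfy (i ≤ i′ and j ≤ j′) or (i′ ≤ i and j′ ≤ j). -/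
/-!
Write `μ = r - c` with `r = μ⁺` and `c = μ⁻`. Conditions (a) and (b) say exactly that the rows of
`n` sum to `r` and its columns to `c`, so `n` is a transport plan from `r` to `c`, and (c) says
that its support is a chain: `n` is the plan of the northwest corner rule.

For existence, tile `[0, ∑ r)` once by consecutive intervals of lengths `r i` and once by
consecutive intervals of lengths `c j`, and let `n i j` be the size of the overlap of the `i`-th
interval of the first tiling with the `j`-th of the second. For uniqueness, a plan with chain
support puts mass exactly `min (∑_{i ≤ a} r i) (∑_{j ≤ b} c j)` on each corner
`{i ≤ a} × {j ≤ b}`, and these corner sums determine the plan.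
-/

open Finset

theorem Finset.eq_of_sum_Iic_eq {α M : Type*} [PartialOrder α] [LocallyFiniteOrderBot α]
    [WellFoundedLT α] [AddCancelCommMonoid M] {f g : α → M}
    (h : ∀ a, ∑ x ∈ Iic a, f x = ∑ x ∈ Iic a, g x) : f = g := by
  funext a
  induction a using WellFoundedLT.induction with
  | ind a ih =>
    have ha := h a
    rw [← sum_Iio_add_eq_sum_Iic, ← sum_Iio_add_eq_sum_Iic,
      sum_congr rfl fun x hx => ih x (mem_Iio.1 hx)] at ha
    exact add_left_cancel ha

namespace NorthwestCorner

section Existence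

variable {ι κ : Type*} [LinearOrder ι] [LocallyFiniteOrderBot ι]
  [LinearOrder κ] [LocallyFiniteOrderBot κ]

def block (r : ι → ℕ) (i : ι) : Finset ℕ :=
  Ico (∑ t ∈ Iio i, r t) (∑ t ∈ Iic i, r t)

def plan (r : ι → ℕ) (c : κ → ℕ) (i : ι) (j : κ) : ℕ :=
  #(block r i ∩ block c j)

theorem card_block (r : ι → ℕ) (i : ι) : #(block r i) = r i := by
  rw [block, Nat.card_Ico, ← sum_Iio_add_eq_sum_Iic, Nat.add_sub_cancel_left]

theorem lt_of_mem_block {r : ι → ℕ} {i i' : ι} {x y : ℕ} (hi : i < i')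
    (hx : x ∈ block r i) (hy : y ∈ block r i') : x < y := by
  have hsub : ∑ t ∈ Iic i, r t ≤ ∑ t ∈ Iio i', r t :=
    sum_le_sum_of_subset fun t ht => mem_Iio.2 ((mem_Iic.1 ht).trans_lt hi)
  rw [block, mem_Ico] at hx hy
  omega

theorem le_of_mem_block {r : ι → ℕ} {i i' : ι} {x y : ℕ}
    (hx : x ∈ block r i) (hy : y ∈ block r i') (hxy : x ≤ y) : i ≤ i' :=
  le_of_not_gt fun hi => (lt_of_mem_block hi hy hx).not_ge hxy

theorem plan_eq_zero {r : ι → ℕ} {c : κ → ℕ} {i : ι} {j : κ} (h : r i = 0 ∨ c j = 0) :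
    plan r c i j = 0 := by
  rcases h with h | h
  · exact Nat.eq_zero_of_le_zero (h ▸ card_block r i ▸ card_le_card inter_subset_left)
  · exact Nat.eq_zero_of_le_zero (h ▸ card_block c j ▸ card_le_card inter_subset_right)

theorem isChain_support_plan (r : ι → ℕ) (c : κ → ℕ) :
    IsChain (· ≤ ·) {p : ι × κ | 0 < plan r c p.1 p.2} := by
  rintro ⟨i, j⟩ hp ⟨i', j'⟩ hq -
  obtain ⟨x, hx⟩ := card_pos.1 hp
  obtain ⟨y, hy⟩ := card_pos.1 hq
  rw [mem_inter] at hx hy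
  rcases le_total x y with hxy | hxy
  · exact Or.inl ⟨le_of_mem_block hx.1 hy.1 hxy, le_of_mem_block hx.2 hy.2 hxy⟩
  · exact Or.inr ⟨le_of_mem_block hy.1 hx.1 hxy, le_of_mem_block hy.2 hx.2 hxy⟩

variable [Fintype ι] [Fintype κ]

theorem pairwiseDisjoint_block (r : ι → ℕ) :
    ((univ : Finset ι) : Set ι).PairwiseDisjoint (block r) := by
  intro i _ i' _ hne
  rw [Function.onFun, disjoint_left]
  intro x hx hx'
  rcases hne.lt_or_gt with hlt | hlt
  · exact (lt_of_mem_block hlt hx hx').false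
  · exact (lt_of_mem_block hlt hx' hx).false

theorem block_subset_range (r : ι → ℕ) (i : ι) : block r i ⊆ range (∑ t, r t) := by
  intro x hx
  have hle : ∑ t ∈ Iic i, r t ≤ ∑ t, r t := sum_le_sum_of_subset (subset_univ _)
  rw [block, mem_Ico] at hx
  rw [mem_range]
  omega

theorem biUnion_block (r : ι → ℕ) : univ.biUnion (block r) = range (∑ t, r t) :=
  eq_of_subset_of_card_le (biUnion_subset.2 fun i _ => block_subset_range r i) <| by
    rw [card_range, card_biUnion (pairwiseDisjoint_block r)]
    simp only [card_block, le_refl]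

theorem sum_card_inter_block {A : Finset ℕ} (c : κ → ℕ) (hA : A ⊆ range (∑ t, c t)) :
    ∑ j, #(A ∩ block c j) = #A := by
  rw [← card_biUnion fun j _ j' _ hne =>
      (pairwiseDisjoint_block c (mem_univ j) (mem_univ j') hne).mono inter_subset_right
        inter_subset_right,
    ← inter_biUnion, biUnion_block, inter_eq_left.2 hA]

variable {r : ι → ℕ} {c : κ → ℕ}

theorem sum_plan_row (hrc : ∑ t, r t = ∑ t, c t) (i : ι) : ∑ j, plan r c i j = r i := by
  rw [← card_block r i]
  exact sum_card_inter_block c (hrc ▸ block_subset_range r i)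

theorem sum_plan_col (hrc : ∑ t, r t = ∑ t, c t) (j : κ) : ∑ i, plan r c i j = c j := by
  simp only [plan, inter_comm (block r _)]
  rw [← card_block c j]
  exact sum_card_inter_block r (hrc ▸ block_subset_range c j)

end Existence

section Uniqueness

variable {ι κ : Type*} [Preorder ι] [Preorder κ] {m : ι → κ → ℕ}

theorem support_le_or_support_le (hm : IsChain (· ≤ ·) {p : ι × κ | 0 < m p.1 p.2})
    (a : ι) (b : κ) :
    (∀ i ≤ a, ∀ j, 0 < m i j → j ≤ b) ∨ (∀ j ≤ b, ∀ i, 0 < m i j → i ≤ a) := by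
  by_contra! h
  obtain ⟨⟨i, hia, j, hij, hjb⟩, ⟨j', hjb', i', hij', hia'⟩⟩ := h
  rcases hm.total (x := (i, j)) (y := (i', j')) hij hij' with h | h
  · exact hjb (h.2.trans hjb')
  · exact hia' (h.1.trans hia)

variable [Fintype ι] [LocallyFiniteOrderBot ι] [Fintype κ] [LocallyFiniteOrderBot κ]
  [DecidableLE (ι × κ)]

theorem sum_Iic_eq_sum_of_support_le {f : κ → ℕ} {b : κ} (hf : ∀ j, 0 < f j → j ≤ b) :
    ∑ j ∈ Iic b, f j = ∑ j, f j :=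
  sum_subset (subset_univ _) fun j _ hj =>
    Nat.eq_zero_of_not_pos fun hpos => hj (mem_Iic.2 (hf j hpos))

theorem sum_Iic_prod_eq_min (hm : IsChain (· ≤ ·) {p : ι × κ | 0 < m p.1 p.2})
    (a : ι) (b : κ) :
    ∑ p ∈ Iic (a, b), m p.1 p.2 = min (∑ i ∈ Iic a, ∑ j, m i j) (∑ j ∈ Iic b, ∑ i, m i j) := by
  have hrows : ∑ p ∈ Iic (a, b), m p.1 p.2 = ∑ i ∈ Iic a, ∑ j ∈ Iic b, m i j :=
    sum_product _ _ _
  have hcols : ∑ p ∈ Iic (a, b), m p.1 p.2 = ∑ j ∈ Iic b, ∑ i ∈ Iic a, m i j :=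
    sum_product_right _ _ _
  have hle_rows : ∑ p ∈ Iic (a, b), m p.1 p.2 ≤ ∑ i ∈ Iic a, ∑ j, m i j :=
    hrows ▸ sum_le_sum fun i _ => sum_le_sum_of_subset (subset_univ _)
  have hle_cols : ∑ p ∈ Iic (a, b), m p.1 p.2 ≤ ∑ j ∈ Iic b, ∑ i, m i j :=
    hcols ▸ sum_le_sum fun j _ => sum_le_sum_of_subset (subset_univ _)
  rcases support_le_or_support_le hm a b with h | h
  · have heq : ∑ p ∈ Iic (a, b), m p.1 p.2 = ∑ i ∈ Iic a, ∑ j, m i j := by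
      rw [hrows]
      exact sum_congr rfl fun i hi => sum_Iic_eq_sum_of_support_le (h i (mem_Iic.1 hi))
    omega
  · have heq : ∑ p ∈ Iic (a, b), m p.1 p.2 = ∑ j ∈ Iic b, ∑ i, m i j := by
      rw [hcols]
      exact sum_congr rfl fun j hj => sum_Iic_eq_sum_of_support_le (h j (mem_Iic.1 hj))
    omega

end Uniqueness

theorem eq_of_isChain_support {ι κ : Type*} [PartialOrder ι] [Fintype ι]
    [LocallyFiniteOrderBot ι] [PartialOrder κ] [Fintype κ] [LocallyFiniteOrderBot κ]
    [DecidableLE (ι × κ)] {m m' : ι → κ → ℕ}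
    (hm : IsChain (· ≤ ·) {p : ι × κ | 0 < m p.1 p.2})
    (hm' : IsChain (· ≤ ·) {p : ι × κ | 0 < m' p.1 p.2})
    (hrow : ∀ i, ∑ j, m i j = ∑ j, m' i j) (hcol : ∀ j, ∑ i, m i j = ∑ i, m' i j) :
    m = m' := by
  have h := eq_of_sum_Iic_eq (f := Function.uncurry m) (g := Function.uncurry m')
    fun ⟨a, b⟩ => by
      simp only [Function.uncurry_def, sum_Iic_prod_eq_min hm, sum_Iic_prod_eq_min hm', hrow, hcol]
  exact funext fun i => funext fun j => congrFun h (i, j)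

section Conditions

variable {ι : Type*} {m : ι → ι → ℕ}

theorem isChain_support_iff [Preorder ι] (hm : ∀ i, m i i = 0) :
    IsChain (· ≤ ·) {p : ι × ι | 0 < m p.1 p.2} ↔
      ∀ i j i' j' : ι, i ≠ j → i' ≠ j' → 0 < m i j → 0 < m i' j' →
        (i ≤ i' ∧ j ≤ j') ∨ (i' ≤ i ∧ j' ≤ j) := by
  have ne_of_pos : ∀ {i j}, 0 < m i j → i ≠ j := fun h hij => by simp [hij, hm] at h
  exact ⟨fun h i j i' j' _ _ hp hq => h.total (x := (i, j)) (y := (i', j')) hp hq,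
    fun h p hp q hq _ => h _ _ _ _ (ne_of_pos hp) (ne_of_pos hq) hp hq⟩

variable [Fintype ι]

theorem sum_ne_sub_sum_ne_of_diag_eq_zero [DecidableEq ι] (hm : ∀ i, m i i = 0) (k : ι) :
    (∑ j ∈ univ.filter (fun j => j ≠ k), (m k j : ℤ)) -
        ∑ i ∈ univ.filter (fun i => i ≠ k), (m i k : ℤ) =
      ((∑ j, m k j : ℕ) : ℤ) - (∑ i, m i k : ℕ) := by
  have hrow := sum_filter_of_ne (s := univ) (p := fun j => j ≠ k) (f := fun j => (m k j : ℤ))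
    fun j _ hj hjk => hj (by simp [hjk, hm])
  have hcol := sum_filter_of_ne (s := univ) (p := fun i => i ≠ k) (f := fun i => (m i k : ℤ))
    fun i _ hi hik => hi (by simp [hik, hm])
  rw [hrow, hcol]
  push_cast
  rfl

theorem sum_row_eq_zero_or_sum_col_eq_zero (hm : ∀ i, m i i = 0)
    (hdisj : {i | ∃ j, j ≠ i ∧ 0 < m i j} ∩ {j | ∃ i, i ≠ j ∧ 0 < m i j} = (∅ : Set ι))
    (k : ι) : ∑ j, m k j = 0 ∨ ∑ i, m i k = 0 := by
  by_contra! h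
  obtain ⟨j, -, hj⟩ := exists_ne_zero_of_sum_ne_zero h.1
  obtain ⟨i, -, hi⟩ := exists_ne_zero_of_sum_ne_zero h.2
  refine Set.eq_empty_iff_forall_notMem.1 hdisj k ⟨⟨j, ?_, Nat.pos_of_ne_zero hj⟩,
    ⟨i, ?_, Nat.pos_of_ne_zero hi⟩⟩
  · rintro rfl; exact hj (hm j)
  · rintro rfl; exact hi (hm i)

theorem weight_and_disjoint_iff [DecidableEq ι] {μ : ι → ℤ} (hm : ∀ i, m i i = 0) :
    ((∀ k, μ k = (∑ j ∈ univ.filter (fun j => j ≠ k), (m k j : ℤ)) -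
          ∑ i ∈ univ.filter (fun i => i ≠ k), (m i k : ℤ)) ∧
      {i | ∃ j, j ≠ i ∧ 0 < m i j} ∩ {j | ∃ i, i ≠ j ∧ 0 < m i j} = (∅ : Set ι)) ↔
    ∀ k, ∑ j, m k j = (μ k).toNat ∧ ∑ i, m i k = (-μ k).toNat := by
  simp only [sum_ne_sub_sum_ne_of_diag_eq_zero hm]
  constructor
  · rintro ⟨hwt, hdisj⟩ k
    have := hwt k
    have := sum_row_eq_zero_or_sum_col_eq_zero hm hdisj k
    omega
  · intro h
    refine ⟨fun k => by rw [(h k).1, (h k).2, Int.toNat_sub_toNat_neg], ?_⟩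
    refine Set.eq_empty_iff_forall_notMem.2 fun k ⟨⟨j, _, hj⟩, ⟨i, _, hi⟩⟩ => ?_
    have hrow : 0 < ∑ j, m k j :=
      hj.trans_le (single_le_sum (f := (m k ·)) (fun _ _ => Nat.zero_le _) (mem_univ j))
    have hcol : 0 < ∑ i, m i k :=
      hi.trans_le (single_le_sum (f := (m · k)) (fun _ _ => Nat.zero_le _) (mem_univ i))
    have := h k
    omega

end Conditions

end NorthwestCorner

open NorthwestCorner

theorem stmt_2_general (d : ℕ) (μ : Fin (d+1) → ℤ)
    (hsum : ∑ k, μ k = 0) :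
    ∃! n : Fin (d+1) → Fin (d+1) → ℕ,
      (∀ i, n i i = 0) ∧
      (∀ k, μ k = (∑ j ∈ Finset.univ.filter (fun j => j ≠ k), (n k j : ℤ)) -
          ∑ i ∈ Finset.univ.filter (fun i => i ≠ k), (n i k : ℤ)) ∧
      ({i | ∃ j, j ≠ i ∧ 0 < n i j} ∩ {j | ∃ i, i ≠ j ∧ 0 < n i j}
        = (∅ : Set (Fin (d+1)))) ∧
      (∀ i j i' j' : Fin (d+1), i ≠ j → i' ≠ j' → 0 < n i j → 0 < n i' j' →
        (i ≤ i' ∧ j ≤ j') ∨ (i' ≤ i ∧ j' ≤ j)) := by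
  set r : Fin (d+1) → ℕ := fun k => (μ k).toNat
  set c : Fin (d+1) → ℕ := fun k => (-μ k).toNat
  have hrc : ∑ k, r k = ∑ k, c k := by
    have h : ∑ k, ((r k : ℤ) - c k) = 0 := by simpa only [r, c, Int.toNat_sub_toNat_neg] using hsum
    rw [sum_sub_distrib, sub_eq_zero] at h
    exact_mod_cast h
  have hdiag : ∀ k, plan r c k k = 0 := fun k =>
    plan_eq_zero (show (μ k).toNat = 0 ∨ (-μ k).toNat = 0 by omega)
  obtain ⟨hwt, hdisj⟩ :=
    (weight_and_disjoint_iff hdiag).2 fun k => ⟨sum_plan_row hrc k, sum_plan_col hrc k⟩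
  refine ⟨plan r c, ⟨hdiag, hwt, hdisj, (isChain_support_iff hdiag).1 (isChain_support_plan r c)⟩,
    fun m ⟨hm_diag, hm_wt, hm_disj, hm_chain⟩ => ?_⟩
  have hsums := (weight_and_disjoint_iff hm_diag).1 ⟨hm_wt, hm_disj⟩
  exact eq_of_isChain_support ((isChain_support_iff hm_diag).2 hm_chain)
    (isChain_support_plan r c) (fun k => by rw [(hsums k).1, sum_plan_row hrc])
    (fun k => by rw [(hsums k).2, sum_plan_col hrc])

/-- For every μ : {0,…,d} → ℤ summing to 0 there is exactly one family
(n_{ij})_{i≠j} of nonnegative integers of weight μ which is "sorted": the sets of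
first and of second indices of its support are disjoint, and the support is a chain
for the componentwise order. -/
theorem stmt_2 (d : ℕ) (hd : 1 ≤ d) (μ : Fin (d+1) → ℤ)
    (hsum : ∑ k, μ k = 0) :
    ∃! n : Fin (d+1) → Fin (d+1) → ℕ,
      (∀ i, n i i = 0) ∧
      (∀ k, μ k = (∑ j ∈ Finset.univ.filter (fun j => j ≠ k), (n k j : ℤ)) -
          ∑ i ∈ Finset.univ.filter (fun i => i ≠ k), (n i k : ℤ)) ∧
      ({i | ∃ j, j ≠ i ∧ 0 < n i j} ∩ {j | ∃ i, i ≠ j ∧ 0 < n i j}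
        = (∅ : Set (Fin (d+1)))) ∧
      (∀ i j i' j' : Fin (d+1), i ≠ j → i' ≠ j' → 0 < n i j → 0 < n i' j' →
        (i ≤ i' ∧ j ≤ j') ∨ (i' ≤ i ∧ j' ≤ j)) :=
  stmt_2_general d μ hsum
end

section
/- The K-linear map ρ : 𝔤 → End_K(V) determined on matrix units by ρ(E_{ij})(δ_μ) = (μ(j) − 1)·δ_{μ+ε_i−ε_j} for i ≠ j and ρ(E_{kk})(δ_μ) = μ(k)·δ_μ is a homomorphism of Lie algebras, i.e. ρ([x,y]) = ρ(x)∘ρ(y) − ρ(y)∘ρ(x) for all x, y ∈ 𝔤 = gl_{d+1}(K). -/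
/-!
Think of `δ_μ` as the Laurent monomial `x^μ`. Then `ρ(E_ij) = A_j ∘ X_i`, where `X_i` multiplies by
`x_i` and `A_j δ_μ = (μ_j - 1) δ_{μ - ε_j}`. The `X_i` commute, the `A_j` commute, and
`[A_j, X_i] = δ_ij`: these are the canonical commutation relations of a Weyl algebra, under which
`E_ij ↦ A_j X_i` satisfies the commutation relations of the matrix units. Bilinearity of the
bracket extends this from matrix units to all of `gl_{d+1}`.
-/

theorem Matrix.lie_single_single {n R : Type*} [DecidableEq n] [Fintype n] [Ring R]
    (i j k l : n) :
    ⁅Matrix.single i j (1 : R), Matrix.single k l (1 : R)⁆ =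
      (if j = k then Matrix.single i l 1 else 0) - (if l = i then Matrix.single k j 1 else 0) := by
  rw [Ring.lie_def]
  congr 1
  · split_ifs with h
    · rw [h, single_mul_single_same, one_mul]
    · exact single_mul_single_of_ne (h := h) ..
  · split_ifs with h
    · rw [h, single_mul_single_same, one_mul]
    · exact single_mul_single_of_ne (h := h) ..

theorem LinearMap.map_lie_of_basis {R A B ι : Type*} [CommSemiring R]
    [Ring A] [Module R A] [SMulCommClass R A A] [IsScalarTower R A A]
    [Ring B] [Module R B] [SMulCommClass R B B] [IsScalarTower R B B]
    (f : A →ₗ[R] B) (b : Module.Basis ι R A)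
    (h : ∀ i j, f ⁅b i, b j⁆ = ⁅f (b i), f (b j)⁆) (x y : A) : f ⁅x, y⁆ = ⁅f x, f y⁆ := by
  have hext := LinearMap.ext_basis
    (B := (LinearMap.mul R A - (LinearMap.mul R A).flip).compr₂ f)
    (B' := (LinearMap.mul R B - (LinearMap.mul R B).flip).compl₁₂ f f) b b
    (by simpa [Ring.lie_def] using h)
  simpa [Ring.lie_def] using LinearMap.congr_fun₂ hext x y

theorem lie_mul_mul_of_weyl_relations {R ι : Type*} [Ring R] [DecidableEq ι] {X A : ι → R}
    (hX : ∀ i k, Commute (X i) (X k)) (hA : ∀ j l, Commute (A j) (A l))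
    (hAX : ∀ i j, ⁅A j, X i⁆ = if i = j then 1 else 0) (i j k l : ι) :
    ⁅A j * X i, A l * X k⁆ =
      (if j = k then A l * X i else 0) - (if l = i then A j * X k else 0) := by
  have hXA : ∀ i j, X i * A j = A j * X i - if i = j then 1 else 0 := fun i j => by
    rw [← hAX, Ring.lie_def]; abel
  calc ⁅A j * X i, A l * X k⁆ = A j * (X i * A l) * X k - A l * (X k * A j) * X i := by
        rw [Ring.lie_def]; simp only [mul_assoc]
    _ = A j * A l * (X i * X k) - A l * A j * (X k * X i)
          - (if i = l then A j * X k else 0) + (if k = j then A l * X i else 0) := by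
        rw [hXA, hXA]; split_ifs <;> noncomm_ring
    _ = _ := by
        rw [(hA j l).eq, (hX i k).eq]; simp only [eq_comm (a := k), eq_comm (a := i)]; abel

namespace LaurentWeyl

variable (K : Type*) {ι : Type*} [DecidableEq ι] [CommRing K]

noncomputable def raiseOp (i : ι) : Module.End K ((ι → ℤ) →₀ K) :=
  Finsupp.lmapDomain K K (· + Pi.single i 1)

noncomputable def lowerOp (j : ι) : Module.End K ((ι → ℤ) →₀ K) :=
  Finsupp.linearCombination K fun μ => (μ j - 1) • Finsupp.single (μ - Pi.single j 1) (1 : K)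

variable {K}

theorem raiseOp_single_one (i : ι) (μ : ι → ℤ) :
    raiseOp K i (Finsupp.single μ 1) = Finsupp.single (μ + Pi.single i 1) 1 :=
  Finsupp.mapDomain_single

theorem lowerOp_single_one (j : ι) (μ : ι → ℤ) :
    lowerOp K j (Finsupp.single μ 1) = (μ j - 1) • Finsupp.single (μ - Pi.single j 1) 1 := by
  simp [lowerOp]

theorem raiseOp_commute (i k : ι) : Commute (raiseOp K i) (raiseOp K k) := by
  refine Finsupp.basisSingleOne.ext fun μ => ?_
  simp only [Finsupp.coe_basisSingleOne, Module.End.mul_apply, raiseOp_single_one, add_right_comm]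

theorem lowerOp_commute (j l : ι) : Commute (lowerOp K j) (lowerOp K l) := by
  refine Finsupp.basisSingleOne.ext fun μ => ?_
  rcases eq_or_ne j l with rfl | hjl
  · rfl
  · simp only [Finsupp.coe_basisSingleOne, Module.End.mul_apply, lowerOp_single_one, map_zsmul,
      smul_smul, Pi.sub_apply, Pi.single_eq_of_ne hjl, Pi.single_eq_of_ne hjl.symm, sub_zero,
      sub_right_comm μ, mul_comm]

theorem lowerOp_mul_raiseOp_single_one (i j : ι) (μ : ι → ℤ) :
    (lowerOp K j * raiseOp K i) (Finsupp.single μ 1) =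
      ((μ + Pi.single i 1 : ι → ℤ) j - 1) •
        Finsupp.single (μ + Pi.single i 1 - Pi.single j 1) 1 := by
  rw [Module.End.mul_apply, raiseOp_single_one, lowerOp_single_one]

theorem lie_lowerOp_raiseOp (i j : ι) :
    ⁅lowerOp K j, raiseOp K i⁆ = if i = j then 1 else 0 := by
  refine Finsupp.basisSingleOne.ext fun μ => ?_
  simp only [Finsupp.coe_basisSingleOne, Ring.lie_def, LinearMap.sub_apply,
    Module.End.mul_apply, lowerOp_single_one, map_zsmul, raiseOp_single_one, sub_add_eq_add_sub,
    ← sub_smul, Pi.add_apply]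
  rcases eq_or_ne i j with rfl | hij
  · simp
  · simp [hij]

theorem eq_lowerOp_mul_raiseOp_of_ne {φ : Module.End K ((ι → ℤ) →₀ K)} {i j : ι} (hij : i ≠ j)
    (h : ∀ μ : ι → ℤ,
      φ (Finsupp.single μ 1) = (μ j - 1) • Finsupp.single (μ + Pi.single i 1 - Pi.single j 1) 1) :
    φ = lowerOp K j * raiseOp K i := by
  refine Finsupp.basisSingleOne.ext fun μ => ?_
  rw [Finsupp.coe_basisSingleOne, h, lowerOp_mul_raiseOp_single_one, Pi.add_apply,
    Pi.single_eq_of_ne hij.symm, add_zero]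

theorem eq_lowerOp_mul_raiseOp_self {φ : Module.End K ((ι → ℤ) →₀ K)} {k : ι}
    (h : ∀ μ : ι → ℤ, φ (Finsupp.single μ 1) = μ k • Finsupp.single μ 1) :
    φ = lowerOp K k * raiseOp K k := by
  refine Finsupp.basisSingleOne.ext fun μ => ?_
  rw [Finsupp.coe_basisSingleOne, h, lowerOp_mul_raiseOp_single_one, add_sub_cancel_right,
    Pi.add_apply, Pi.single_eq_same, add_sub_cancel_right]

end LaurentWeyl

open LaurentWeyl in
theorem stmt_5_general (K : Type) [Field K] (d : ℕ)
    (ρ : Matrix (Fin (d+1)) (Fin (d+1)) K →ₗ[K]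
        Module.End K ((Fin (d+1) → ℤ) →₀ K))
    (hρ₁ : ∀ (i j : Fin (d+1)), i ≠ j → ∀ μ : Fin (d+1) → ℤ,
      ρ (Matrix.single i j (1:K)) (Finsupp.single μ (1:K)) =
        (μ j - 1) • Finsupp.single (μ + Pi.single i 1 - Pi.single j 1) (1:K))
    (hρ₂ : ∀ (k : Fin (d+1)) (μ : Fin (d+1) → ℤ),
      ρ (Matrix.single k k (1:K)) (Finsupp.single μ (1:K)) =
        μ k • Finsupp.single μ (1:K)) :
    ∀ x y : Matrix (Fin (d+1)) (Fin (d+1)) K,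
      ρ ⁅x, y⁆ = ρ x * ρ y - ρ y * ρ x := by
  have hρ : ∀ i j, ρ (Matrix.single i j 1) = lowerOp K j * raiseOp K i := fun i j => by
    rcases eq_or_ne i j with rfl | hij
    exacts [eq_lowerOp_mul_raiseOp_self (hρ₂ i), eq_lowerOp_mul_raiseOp_of_ne hij (hρ₁ i j hij)]
  intro x y
  rw [← Ring.lie_def (ρ x)]
  refine LinearMap.map_lie_of_basis (B := Module.End K ((Fin (d+1) → ℤ) →₀ K)) ρ
    (Matrix.stdBasis K _ _) (fun ⟨i, j⟩ ⟨k, l⟩ => ?_) x y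
  simp only [Matrix.stdBasis_eq_single, Matrix.lie_single_single, map_sub, apply_ite ρ, map_zero,
    hρ]
  exact (lie_mul_mul_of_weyl_relations (X := raiseOp K) (A := lowerOp K)
    raiseOp_commute lowerOp_commute lie_lowerOp_raiseOp ..).symm

/-- The K-linear map ρ : 𝔤 → End_K(V) determined on matrix units by
ρ(E_{ij})(δ_μ) = (μ(j) − 1)·δ_{μ+ε_i−ε_j} for i ≠ j and ρ(E_{kk})(δ_μ) = μ(k)·δ_μ
is a homomorphism of Lie algebras. -/
theorem stmt_5 (K : Type) [Field K] [CharZero K] (d : ℕ) (hd : 1 ≤ d)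
    (ρ : Matrix (Fin (d+1)) (Fin (d+1)) K →ₗ[K]
        Module.End K ((Fin (d+1) → ℤ) →₀ K))
    (hρ₁ : ∀ (i j : Fin (d+1)), i ≠ j → ∀ μ : Fin (d+1) → ℤ,
      ρ (Matrix.single i j (1:K)) (Finsupp.single μ (1:K)) =
        (μ j - 1) • Finsupp.single (μ + Pi.single i 1 - Pi.single j 1) (1:K))
    (hρ₂ : ∀ (k : Fin (d+1)) (μ : Fin (d+1) → ℤ),
      ρ (Matrix.single k k (1:K)) (Finsupp.single μ (1:K)) =
        μ k • Finsupp.single μ (1:K)) :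
    ∀ x y : Matrix (Fin (d+1)) (Fin (d+1)) K,
      ρ ⁅x, y⁆ = ρ x * ρ y - ρ y * ρ x :=
  stmt_5_general K d ρ hρ₁ hρ₂
end

section
/- For every μ : {0,…,d} → ℤ with Σ_k μ(k) = 0, the K-subspace {z + 𝔟 : z ∈ U(𝔤) has weight μ} of U(𝔤)/𝔟 is exactly one-dimensional. -/
/-!
The map `z ↦ ρ'(z) δ₀` identifies `U(𝔤)/𝔟` with a subspace of `V`. Since the `E_kk` act
diagonally on the basis `δ_ν` with pairwise distinct characters (characteristic zero), a
`z` of weight `μ` is sent into the line `K δ_μ`. Conversely, if `μ ≠ 0` has sum zero, pick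
`μ i > 0 > μ j` and move one unit from `i` to `j`; by induction on `∑ |μ k|` some `z'` of the
new weight sends `δ₀` to a nonzero multiple of its `δ`, and `E_ij z'` has weight `μ` and sends
`δ₀` to a nonzero multiple of `δ_μ`. So the weight-`μ` part of `U(𝔤)/𝔟` is that line.
-/

open UniversalEnvelopingAlgebra

attribute [local instance 100] LieRing.ofAssociativeRing

def IsWeightVector {R κ : Type*} [Ring R] (H : κ → R) (μ : κ → ℤ) (z : R) : Prop :=
  ∀ k, H k * z - z * H k = μ k • z

namespace IsWeightVector

variable {R κ : Type*} [Ring R] {H : κ → R}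

theorem one : IsWeightVector H 0 1 := fun k => by simp

theorem mul {μ ν : κ → ℤ} {a b : R} (ha : IsWeightVector H μ a) (hb : IsWeightVector H ν b) :
    IsWeightVector H (μ + ν) (a * b) := fun k => by
  calc H k * (a * b) - a * b * H k = (H k * a - a * H k) * b + a * (H k * b - b * H k) := by
        noncomm_ring
    _ = (μ + ν) k • (a * b) := by
        rw [ha k, hb k, smul_mul_assoc, mul_smul_comm, Pi.add_apply, add_smul]

theorem map_apply_eq_smul {K A V : Type*} [CommRing K] [Ring A] [Algebra K A]
    [AddCommGroup V] [Module K V] {H : κ → A} {μ : κ → ℤ} {z : A}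
    (hz : IsWeightVector H μ z) (ρ : A →ₐ[K] Module.End K V) {v : V}
    (hv : ∀ k, ρ (H k) v = 0) (k : κ) :
    ρ (H k) (ρ z v) = μ k • ρ z v := by
  have := congrArg (fun a => ρ a v) (hz k)
  simpa [hv k] using this

end IsWeightVector

section GlWeights

variable (K : Type*) [CommRing K] {n : Type*} [Fintype n] [DecidableEq n]

theorem Matrix.single_diag_mul_sub_mul_single_diag (i j k : n) :
    Matrix.single k k (1 : K) * Matrix.single i j 1 - Matrix.single i j 1 * Matrix.single k k 1
      = (Pi.single i 1 - Pi.single j 1 : n → ℤ) k • Matrix.single i j 1 := by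
  rcases eq_or_ne k i with rfl | hki <;> rcases eq_or_ne k j with rfl | hkj <;>
    simp [Matrix.single_mul_single_of_ne, Ne.symm, *]

theorem isWeightVector_ι_single (i j : n) :
    IsWeightVector (fun k => ι K (Matrix.single k k (1 : K))) (Pi.single i 1 - Pi.single j 1)
      (ι K (Matrix.single i j (1 : K))) := fun k => by
  rw [← Ring.lie_def, ← LieHom.map_lie, Ring.lie_def, Matrix.single_diag_mul_sub_mul_single_diag,
    map_zsmul]

end GlWeights

section DiagonalAction

variable {K κ : Type*} [Field K] {H : κ → Module.End K ((κ → ℤ) →₀ K)}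

theorem apply_apply_eq_smul_of_diagonal (hH : ∀ k ν, H k (Finsupp.single ν 1) = ν k • Finsupp.single ν 1)
    (k : κ) (v : (κ → ℤ) →₀ K) (τ : κ → ℤ) : H k v τ = τ k • v τ := by
  induction v using Finsupp.induction_linear with
  | zero => simp
  | add v w hv hw => simp [hv, hw, smul_add]
  | single ν b =>
    rw [← mul_one b, ← smul_eq_mul, ← Finsupp.smul_single, map_smul, hH]
    rcases eq_or_ne ν τ with rfl | hντ
    · simp [mul_comm]
    · simp [hντ]

theorem eq_smul_single_of_diagonal [CharZero K]
    (hH : ∀ k ν, H k (Finsupp.single ν 1) = ν k • Finsupp.single ν 1)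
    {μ : κ → ℤ} {v : (κ → ℤ) →₀ K} (hv : ∀ k, H k v = μ k • v) :
    v = v μ • Finsupp.single μ 1 := by
  ext τ
  rcases eq_or_ne τ μ with rfl | hτμ
  · simp
  obtain ⟨k, hk⟩ : ∃ k, τ k ≠ μ k := Function.ne_iff.mp hτμ
  have hvτ : (τ k - μ k : K) * v τ = 0 := by
    have := congrArg (· τ) (hv k)
    simp only [apply_apply_eq_smul_of_diagonal hH, Finsupp.smul_apply, zsmul_eq_mul] at this
    rw [sub_mul, this, sub_self]
  have hk' : (τ k - μ k : K) ≠ 0 := sub_ne_zero.mpr (by exact_mod_cast hk)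
  simp [(mul_eq_zero.mp hvτ).resolve_left hk', Ne.symm hτμ]

end DiagonalAction

section Combinatorics

variable {κ : Type*} [Fintype κ]

theorem exists_pos_and_exists_neg_of_sum_eq_zero {μ : κ → ℤ} (hsum : ∑ k, μ k = 0)
    (hμ : μ ≠ 0) : (∃ i, 0 < μ i) ∧ ∃ j, μ j < 0 := by
  obtain ⟨k, hk⟩ := Function.ne_iff.mp hμ
  constructor <;> by_contra! h
  · exact hk ((Finset.sum_eq_zero_iff_of_nonpos fun k _ => h k).mp hsum k (Finset.mem_univ k))
  · exact hk ((Finset.sum_eq_zero_iff_of_nonneg fun k _ => h k).mp hsum k (Finset.mem_univ k))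

theorem sum_natAbs_sub_single_add_single_lt [DecidableEq κ] {μ : κ → ℤ} {i j : κ}
    (hi : 0 < μ i) (hj : μ j < 0) :
    ∑ k, ((μ - Pi.single i 1 + Pi.single j 1 : κ → ℤ) k).natAbs < ∑ k, (μ k).natAbs := by
  have hij : i ≠ j := by rintro rfl; omega
  refine Finset.sum_lt_sum (fun k _ => ?_) ⟨i, Finset.mem_univ i, ?_⟩
  · rcases eq_or_ne k i with rfl | hki <;> rcases eq_or_ne k j with rfl | hkj <;>
      simp [*] <;> omega
  · have : (μ - Pi.single i 1 + Pi.single j 1 : κ → ℤ) i = μ i - 1 := by simp [hij]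
    omega

end Combinatorics

theorem exists_isWeightVector_apply_single_zero {K n : Type*} [Field K] [CharZero K] [Fintype n]
    [DecidableEq n]
    (ρ : UniversalEnvelopingAlgebra K (Matrix n n K) →ₐ[K] Module.End K ((n → ℤ) →₀ K))
    (hρ : ∀ i j : n, i ≠ j → ∀ ν : n → ℤ,
      ρ (ι K (Matrix.single i j (1 : K))) (Finsupp.single ν 1) =
        (ν j - 1) • Finsupp.single (ν + Pi.single i 1 - Pi.single j 1) 1)
    {μ : n → ℤ} (hsum : ∑ k, μ k = 0) :
    ∃ z, ∃ c : K, c ≠ 0 ∧ IsWeightVector (fun k => ι K (Matrix.single k k (1 : K))) μ z ∧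
      ρ z (Finsupp.single 0 1) = c • Finsupp.single μ 1 := by
  induction hN : ∑ k, (μ k).natAbs using Nat.strong_induction_on generalizing μ with
  | _ N IH =>
  by_cases hμ : μ = 0
  · subst hμ
    exact ⟨1, 1, one_ne_zero, IsWeightVector.one, by simp⟩
  obtain ⟨⟨i, hi⟩, ⟨j, hj⟩⟩ := exists_pos_and_exists_neg_of_sum_eq_zero hsum hμ
  have hij : i ≠ j := by rintro rfl; omega
  set μ' : n → ℤ := μ - Pi.single i 1 + Pi.single j 1
  have hsum' : ∑ k, μ' k = 0 := by
    simp [μ', Finset.sum_add_distrib, Finset.sum_sub_distrib, hsum]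
  obtain ⟨z', c', hc', hz', hρz'⟩ :=
    IH _ (hN ▸ sum_natAbs_sub_single_add_single_lt hi hj) hsum' rfl
  -- Raising the negative coordinate `j` is what keeps the factor `μ' j - 1` of `hρ` nonzero.
  have hμ'j : μ' j = μ j + 1 := by simp [μ', hij.symm]
  have hμ' : μ' + Pi.single i 1 - Pi.single j 1 = μ := by
    simp only [μ']; abel
  refine ⟨ι K (Matrix.single i j 1) * z', (μ' j - 1 : ℤ) * c',
    mul_ne_zero (by exact_mod_cast (by omega : μ' j - 1 ≠ 0)) hc', ?_, ?_⟩
  · have := (isWeightVector_ι_single K i j).mul hz'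
    rwa [show Pi.single i 1 - Pi.single j 1 + μ' = μ by simp only [μ']; abel] at this
  · rw [map_mul, Module.End.mul_apply, hρz', map_smul, hρ i j hij, hμ', smul_comm,
      ← Int.cast_smul_eq_zsmul K, smul_smul]

theorem Submodule.rank_map_mkQ_eq_one {K M : Type*} [Field K] [AddCommGroup M] [Module K M]
    {W B : Submodule K M} (φ : M →ₗ[K] K) (hB : ∀ z ∈ W, z ∈ B ↔ φ z = 0) {z₀ : M}
    (hz₀ : z₀ ∈ W) (hφz₀ : φ z₀ ≠ 0) : Module.rank K (W.map B.mkQ) = 1 := by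
  refine (rank_submodule_eq_one_iff _).mpr ⟨B.mkQ z₀, ⟨z₀, hz₀, rfl⟩, ?_, ?_⟩
  · rwa [Submodule.mkQ_apply, ne_eq, Submodule.Quotient.mk_eq_zero, hB z₀ hz₀]
  · rintro _ ⟨z, hz, rfl⟩
    refine Submodule.mem_span_singleton.mpr ⟨φ z / φ z₀, ?_⟩
    rw [← map_smul, Submodule.mkQ_apply, Submodule.mkQ_apply, Submodule.Quotient.eq,
      hB _ (W.sub_mem (W.smul_mem _ hz₀) hz), map_sub, map_smul, smul_eq_mul,
      div_mul_cancel₀ _ hφz₀, sub_self]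

theorem stmt_6_general (K : Type) [Field K] [CharZero K] (d : ℕ)
    (ρ' : UniversalEnvelopingAlgebra K (Matrix (Fin (d+1)) (Fin (d+1)) K) →ₐ[K]
        Module.End K ((Fin (d+1) → ℤ) →₀ K))
    (hρ'₁ : ∀ (i j : Fin (d+1)), i ≠ j → ∀ ν : Fin (d+1) → ℤ,
      ρ' (ι K (Matrix.single i j (1:K))) (Finsupp.single ν (1:K)) =
        (ν j - 1) • Finsupp.single (ν + Pi.single i 1 - Pi.single j 1) (1:K))
    (hρ'₂ : ∀ (k : Fin (d+1)) (ν : Fin (d+1) → ℤ),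
      ρ' (ι K (Matrix.single k k (1:K))) (Finsupp.single ν (1:K)) =
        ν k • Finsupp.single ν (1:K))
    (B : Submodule K (UniversalEnvelopingAlgebra K (Matrix (Fin (d+1)) (Fin (d+1)) K)))
    (hB : ∀ z, z ∈ B ↔ ρ' z (Finsupp.single (0 : Fin (d+1) → ℤ) (1:K)) = 0)
    (μ : Fin (d+1) → ℤ) (hsum : ∑ k, μ k = 0)
    (W : Submodule K (UniversalEnvelopingAlgebra K (Matrix (Fin (d+1)) (Fin (d+1)) K)))
    (hW : ∀ z, z ∈ W ↔ ∀ k : Fin (d+1),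
      ι K (Matrix.single k k (1:K)) * z - z * ι K (Matrix.single k k (1:K))
        = μ k • z) :
    Module.rank K ↥(W.map B.mkQ) = 1 := by
  set δ₀ : (Fin (d+1) → ℤ) →₀ K := Finsupp.single 0 1
  obtain ⟨z₀, c, hc, hz₀, hρz₀⟩ := exists_isWeightVector_apply_single_zero ρ' hρ'₁ hsum
  have hsupport : ∀ z ∈ W, ρ' z δ₀ = ρ' z δ₀ μ • Finsupp.single μ 1 := fun z hz =>
    eq_smul_single_of_diagonal hρ'₂ <|
      IsWeightVector.map_apply_eq_smul ((hW z).mp hz) ρ' fun k =>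
        (hρ'₂ k 0).trans (zero_smul ℤ _)
  let φ := Finsupp.lapply μ ∘ₗ LinearMap.applyₗ δ₀ ∘ₗ ρ'.toLinearMap
  refine Submodule.rank_map_mkQ_eq_one φ (fun z hz => ?_) ((hW z₀).mpr hz₀) ?_
  · rw [hB, hsupport z hz]
    simp [φ]
  · simp [φ, δ₀, hρz₀, hc]

/-- For every μ summing to 0, the subspace {z + 𝔟 : z of weight μ} of
U(𝔤)/𝔟 is exactly one-dimensional, where 𝔟 = {z : ρ'(z)(δ_0) = 0} is the annihilator
of δ_0 in the model V of the cyclic module U(𝔤)ξ. -/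
theorem stmt_6 (K : Type) [Field K] [CharZero K] (d : ℕ) (hd : 1 ≤ d)
    (ρ' : UniversalEnvelopingAlgebra K (Matrix (Fin (d+1)) (Fin (d+1)) K) →ₐ[K]
        Module.End K ((Fin (d+1) → ℤ) →₀ K))
    (hρ'₁ : ∀ (i j : Fin (d+1)), i ≠ j → ∀ ν : Fin (d+1) → ℤ,
      ρ' (ι K (Matrix.single i j (1:K))) (Finsupp.single ν (1:K)) =
        (ν j - 1) • Finsupp.single (ν + Pi.single i 1 - Pi.single j 1) (1:K))
    (hρ'₂ : ∀ (k : Fin (d+1)) (ν : Fin (d+1) → ℤ),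
      ρ' (ι K (Matrix.single k k (1:K))) (Finsupp.single ν (1:K)) =
        ν k • Finsupp.single ν (1:K))
    (B : Submodule K (UniversalEnvelopingAlgebra K (Matrix (Fin (d+1)) (Fin (d+1)) K)))
    (hB : ∀ z, z ∈ B ↔ ρ' z (Finsupp.single (0 : Fin (d+1) → ℤ) (1:K)) = 0)
    (μ : Fin (d+1) → ℤ) (hsum : ∑ k, μ k = 0)
    (W : Submodule K (UniversalEnvelopingAlgebra K (Matrix (Fin (d+1)) (Fin (d+1)) K)))
    (hW : ∀ z, z ∈ W ↔ ∀ k : Fin (d+1),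
      ι K (Matrix.single k k (1:K)) * z - z * ι K (Matrix.single k k (1:K))
        = μ k • z) :
    Module.rank K ↥(W.map B.mkQ) = 1 :=
  stmt_6_general K d ρ' hρ'₁ hρ'₂ B hB μ hsum W hW
end

section
/- For every subset J ⊆ {0,…,d}, the K-subspace span_K{δ_μ : Σ_k μ(k) = 0 and J ⊆ J(μ)} of V is stable under ρ(x) for every x ∈ 𝔤. -/
/-!
Every matrix is a linear combination of the matrix units `E_ij`, and the subspace in question is
spanned by basis vectors `δ_μ`, so it suffices that `ρ(E_ij) δ_μ` lies in it for admissible `μ`.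
For `i = j` this is a multiple of `δ_μ`. For `i ≠ j` it is `(μ j - 1) δ_{μ+ε_i-ε_j}`: the shift
preserves the total weight `∑ μ = 0`, and it can only destroy positivity at `j`, which happens
exactly when `μ j = 1`, i.e. when the coefficient vanishes.
-/

open Finsupp

lemma sum_add_single_sub_single {ι : Type*} [Fintype ι] [DecidableEq ι] (μ : ι → ℤ) (i j : ι) :
    ∑ k, (μ + Pi.single i 1 - Pi.single j 1 : ι → ℤ) k = ∑ k, μ k := by
  simp only [Pi.sub_apply, Pi.add_apply, Finset.sum_sub_distrib, Finset.sum_add_distrib,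
    Finset.sum_pi_single', Finset.mem_univ, if_true]
  omega

lemma pos_add_single_sub_single {ι : Type*} [DecidableEq ι] {μ : ι → ℤ} {i j k : ι}
    (hk : 0 < μ k) (hj : μ j ≠ 1) :
    0 < (μ + Pi.single i 1 - Pi.single j 1 : ι → ℤ) k := by
  simp only [Pi.add_apply, Pi.sub_apply, Pi.single_apply]
  split_ifs with hki hkj <;> subst_vars <;> omega

section Weights

variable {ι : Type*} [Fintype ι] (R : Type*) [Semiring R]

noncomputable def weightSpan (J : Set ι) : Submodule R ((ι → ℤ) →₀ R) :=
  Submodule.span R {w | ∃ μ : ι → ℤ, (∑ k, μ k) = 0 ∧ J ⊆ {k | 0 < μ k} ∧ w = single μ 1}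

variable {R}

lemma single_mem_weightSpan {J : Set ι} {μ : ι → ℤ} (hsum : ∑ k, μ k = 0)
    (hJ : J ⊆ {k | 0 < μ k}) : single μ (1 : R) ∈ weightSpan R J :=
  Submodule.subset_span ⟨μ, hsum, hJ, rfl⟩

lemma weightSpan_le_comap {J : Set ι} (f : Module.End R ((ι → ℤ) →₀ R))
    (hf : ∀ μ : ι → ℤ, ∑ k, μ k = 0 → J ⊆ {k | 0 < μ k} → f (single μ 1) ∈ weightSpan R J) :
    weightSpan R J ≤ (weightSpan R J).comap f :=
  Submodule.span_le.2 fun _ ⟨μ, hsum, hJ, hw⟩ => hw ▸ hf μ hsum hJ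

end Weights

lemma Matrix.mem_compatibleMaps_of_forall_single {n R M : Type*} [Fintype n] [DecidableEq n]
    [CommSemiring R] [AddCommMonoid M] [Module R M] (ρ : Matrix n n R →ₗ[R] Module.End R M)
    (p : Submodule R M) (h : ∀ i j, ρ (Matrix.single i j 1) ∈ p.compatibleMaps p)
    (x : Matrix n n R) : ρ x ∈ p.compatibleMaps p := by
  have hx : x = ∑ i, ∑ j, x i j • Matrix.single i j 1 := by
    simp_rw [Matrix.smul_single, smul_eq_mul, mul_one]
    exact Matrix.matrix_eq_sum_single x
  rw [hx]
  simp only [map_sum]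
  refine Submodule.sum_mem _ fun i _ => Submodule.sum_mem _ fun j _ => ?_
  rw [map_smul]
  exact Submodule.smul_mem _ _ (h i j)

lemma single_mem_compatibleMaps_weightSpan {ι R : Type*} [Fintype ι] [DecidableEq ι]
    [CommRing R] (ρ : Matrix ι ι R →ₗ[R] Module.End R ((ι → ℤ) →₀ R))
    (hρ₁ : ∀ i j : ι, i ≠ j → ∀ μ : ι → ℤ, ρ (Matrix.single i j 1) (single μ 1) =
      (μ j - 1) • single (μ + Pi.single i 1 - Pi.single j 1) 1)
    (hρ₂ : ∀ (k : ι) (μ : ι → ℤ), ρ (Matrix.single k k 1) (single μ 1) = μ k • single μ 1)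
    (J : Set ι) (i j : ι) :
    ρ (Matrix.single i j 1) ∈ (weightSpan R J).compatibleMaps (weightSpan R J) := by
  refine weightSpan_le_comap _ fun μ hsum hJ => ?_
  obtain rfl | hij := eq_or_ne i j
  · rw [hρ₂]
    exact Submodule.smul_of_tower_mem _ _ (single_mem_weightSpan hsum hJ)
  rw [hρ₁ i j hij]
  obtain hj | hj := eq_or_ne (μ j) 1
  · simp [hj]
  refine Submodule.smul_of_tower_mem _ _ (single_mem_weightSpan ?_ ?_)
  · rwa [sum_add_single_sub_single]
  · exact fun k hk => pos_add_single_sub_single (hJ hk) hj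

theorem stmt_8_general (K : Type) [Field K] (d : ℕ)
    (ρ : Matrix (Fin (d+1)) (Fin (d+1)) K →ₗ[K]
        Module.End K ((Fin (d+1) → ℤ) →₀ K))
    (hρ₁ : ∀ (i j : Fin (d+1)), i ≠ j → ∀ μ : Fin (d+1) → ℤ,
      ρ (Matrix.single i j (1:K)) (Finsupp.single μ (1:K)) =
        (μ j - 1) • Finsupp.single (μ + Pi.single i 1 - Pi.single j 1) (1:K))
    (hρ₂ : ∀ (k : Fin (d+1)) (μ : Fin (d+1) → ℤ),
      ρ (Matrix.single k k (1:K)) (Finsupp.single μ (1:K)) =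
        μ k • Finsupp.single μ (1:K))
    (J : Set (Fin (d+1))) :
    ∀ (x : Matrix (Fin (d+1)) (Fin (d+1)) K)
      (v : (Fin (d+1) → ℤ) →₀ K),
      v ∈ Submodule.span K {w : (Fin (d+1) → ℤ) →₀ K | ∃ μ : Fin (d+1) → ℤ,
          (∑ k, μ k) = 0 ∧ J ⊆ {k | 0 < μ k} ∧ w = Finsupp.single μ (1:K)} →
      ρ x v ∈ Submodule.span K {w : (Fin (d+1) → ℤ) →₀ K | ∃ μ : Fin (d+1) → ℤ,
          (∑ k, μ k) = 0 ∧ J ⊆ {k | 0 < μ k} ∧ w = Finsupp.single μ (1:K)} :=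
  fun x _ hv => Matrix.mem_compatibleMaps_of_forall_single ρ (weightSpan K J)
    (single_mem_compatibleMaps_weightSpan ρ hρ₁ hρ₂ J) x hv

/-- For every subset J of {0,…,d}, the subspace
span_K{δ_μ : Σ_k μ(k) = 0 and J ⊆ J(μ)} of V is stable under ρ(x) for all x ∈ 𝔤. -/
theorem stmt_8 (K : Type) [Field K] [CharZero K] (d : ℕ) (hd : 1 ≤ d)
    (ρ : Matrix (Fin (d+1)) (Fin (d+1)) K →ₗ[K]
        Module.End K ((Fin (d+1) → ℤ) →₀ K))
    (hρ₁ : ∀ (i j : Fin (d+1)), i ≠ j → ∀ μ : Fin (d+1) → ℤ,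
      ρ (Matrix.single i j (1:K)) (Finsupp.single μ (1:K)) =
        (μ j - 1) • Finsupp.single (μ + Pi.single i 1 - Pi.single j 1) (1:K))
    (hρ₂ : ∀ (k : Fin (d+1)) (μ : Fin (d+1) → ℤ),
      ρ (Matrix.single k k (1:K)) (Finsupp.single μ (1:K)) =
        μ k • Finsupp.single μ (1:K))
    (J : Set (Fin (d+1))) :
    ∀ (x : Matrix (Fin (d+1)) (Fin (d+1)) K)
      (v : (Fin (d+1) → ℤ) →₀ K),
      v ∈ Submodule.span K {w : (Fin (d+1) → ℤ) →₀ K | ∃ μ : Fin (d+1) → ℤ,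
          (∑ k, μ k) = 0 ∧ J ⊆ {k | 0 < μ k} ∧ w = Finsupp.single μ (1:K)} →
      ρ x v ∈ Submodule.span K {w : (Fin (d+1) → ℤ) →₀ K | ∃ μ : Fin (d+1) → ℤ,
          (∑ k, μ k) = 0 ∧ J ⊆ {k | 0 < μ k} ∧ w = Finsupp.single μ (1:K)} :=
  stmt_8_general K d ρ hρ₁ hρ₂ J
end

section
/- Let J be a nonempty proper subset of {0,…,d}. Set M := span_K{δ_μ : Σ_k μ(k) = 0 and J ⊆ J(μ)} and N := span_K{δ_μ : Σ_k μ(k) = 0, J ⊆ J(μ) and J ≠ J(μ)}. Then N ⊆ M, both are stable under ρ(x) for every x ∈ 𝔤, and every K-subspace W with N ⊆ W ⊆ M that is stable under ρ(x) for all x ∈ 𝔤 equals N or M. -/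
/-!
The diagonal matrices act on `δ_μ` through the pairwise distinct characters `μ`, so a
ρ-stable subspace contains `δ_μ` for every `μ` in the support of any of its vectors. Off the
diagonal, `E_ij` sends `δ_μ` to a nonzero multiple of `δ_{μ+ε_i-ε_j}` as soon as `μ j ≠ 1`;
these steps never shrink `J(μ)`, and they connect any two weights with the same sum and the
same `J(μ)`. So `M` and `N` are spanned by the `δ_μ` of step-closed sets of weights, and a
stable `W ⊄ N` contains some `δ_μ` with `J(μ) = J`, hence all of them, hence `M`.
-/

open Finsupp

section WeightVectors

variable {ι A K : Type*} [Field K]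

lemma apply_eq_mul_of_forall_single (T : Module.End K (ι →₀ K)) (χ : ι → K)
    (hT : ∀ μ, T (single μ 1) = χ μ • single μ 1) (v : ι →₀ K) (ν : ι) :
    T v ν = χ ν * v ν := by
  induction v using Finsupp.induction_linear with
  | zero => simp
  | add f g hf hg => simp [hf, hg, mul_add]
  | single μ c =>
    rw [← smul_single_one, map_smul, hT, smul_smul]
    by_cases h : μ = ν <;> simp [h, mul_comm]

lemma single_mem_of_mem_support (T : A → Module.End K (ι →₀ K)) (χ : ι → A → K)
    (hχ : Function.Injective χ) (hT : ∀ a μ, T a (single μ 1) = χ μ a • single μ 1)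
    {W : Submodule K (ι →₀ K)} (hW : ∀ a, ∀ v ∈ W, T a v ∈ W)
    {v : ι →₀ K} (hv : v ∈ W) {μ : ι} (hμ : μ ∈ v.support) : single μ 1 ∈ W := by
  induction hn : v.support.card using Nat.strong_induction_on generalizing v with
  | _ n ih =>
  by_cases hs : v.support ⊆ {μ}
  · obtain ⟨c, rfl⟩ : ∃ c, v = single μ c := ⟨_, support_subset_singleton.mp hs⟩
    have hc : c ≠ 0 := by simpa using hμ
    simpa [smul_single, inv_mul_cancel₀ hc] using W.smul_mem c⁻¹ hv
  obtain ⟨ν, hν, hνμ⟩ : ∃ ν ∈ v.support, ν ≠ μ := by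
    simpa [Finset.subset_iff] using hs
  obtain ⟨a, ha⟩ : ∃ a, χ ν a ≠ χ μ a := Function.ne_iff.mp (hχ.ne hνμ)
  -- subtracting `χ ν a • v` from `T a v` kills the `ν`-coefficient and keeps the `μ`-one
  set w := T a v - χ ν a • v
  have hw : ∀ κ, w κ = (χ κ a - χ ν a) * v κ := fun κ => by
    simp [w, apply_eq_mul_of_forall_single (T a) (fun κ => χ κ a) (hT a), sub_mul]
  have hsupp : w.support ⊂ v.support := by
    refine Finset.ssubset_iff_of_subset (fun κ hκ => ?_) |>.mpr ⟨ν, hν, by simp [hw]⟩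
    rw [mem_support_iff, hw] at hκ
    exact mem_support_iff.mpr (right_ne_zero_of_mul hκ)
  refine ih _ (hn ▸ Finset.card_lt_card hsupp) (W.sub_mem (hW a v hv) (W.smul_mem _ hv)) ?_ rfl
  rw [mem_support_iff, hw]
  exact mul_ne_zero (sub_ne_zero.mpr ha.symm) (mem_support_iff.mp hμ)

end WeightVectors

section LadderSteps

variable {ι : Type*}

lemma exists_lt_of_sum_eq [Fintype ι] {μ ν : ι → ℤ} (hsum : ∑ k, μ k = ∑ k, ν k)
    (hne : μ ≠ ν) : ∃ j, ν j < μ j := by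
  by_contra! h
  exact hne (funext fun k =>
    (Finset.sum_eq_sum_iff_of_le fun k _ => h k).mp hsum k (Finset.mem_univ k))

variable [DecidableEq ι]

def IsLadderStep (μ μ' : ι → ℤ) : Prop :=
  ∃ i j, i ≠ j ∧ μ j ≠ 1 ∧ μ' = μ + Pi.single i 1 - Pi.single j 1

lemma add_single_sub_single_apply (μ : ι → ℤ) (i j k : ι) :
    (μ + Pi.single i 1 - Pi.single j 1 : ι → ℤ) k =
      μ k + (if k = i then 1 else 0) - (if k = j then 1 else 0) := by
  simp [Pi.single_apply]

namespace IsLadderStep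

variable {μ μ' : ι → ℤ}

lemma sum_eq [Fintype ι] (h : IsLadderStep μ μ') : ∑ k, μ' k = ∑ k, μ k := by
  obtain ⟨i, j, -, -, rfl⟩ := h
  simp [Finset.sum_add_distrib, Finset.sum_sub_distrib]

lemma setOf_pos_subset (h : IsLadderStep μ μ') : {k | 0 < μ k} ⊆ {k | 0 < μ' k} := by
  obtain ⟨i, j, hij, hj, rfl⟩ := h
  intro k hk
  simp only [Set.mem_ofPred_eq, add_single_sub_single_apply] at hk ⊢
  split_ifs with hki hkj <;> subst_vars <;> first | exact absurd rfl hij | omega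

end IsLadderStep

/-- Induct on `∑ k, |μ k - ν k|`, moving a unit from an entry where `μ` exceeds `ν` to one where
it falls short; the former entry is not `1`, as it would then be positive in `ν` too. -/
lemma reflTransGen_isLadderStep [Fintype ι] {μ ν : ι → ℤ} (hsum : ∑ k, μ k = ∑ k, ν k)
    (hpos : {k | 0 < μ k} = {k | 0 < ν k}) : Relation.ReflTransGen IsLadderStep μ ν := by
  induction hn : ∑ k, (μ k - ν k).natAbs using Nat.strong_induction_on generalizing μ with
  | _ n ih =>
  by_cases hne : μ = ν
  · rw [hne]
  obtain ⟨j, hj⟩ := exists_lt_of_sum_eq hsum hne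
  obtain ⟨i, hi⟩ := exists_lt_of_sum_eq hsum.symm (Ne.symm hne)
  have hij : i ≠ j := by rintro rfl; omega
  have hposk : ∀ k, 0 < μ k ↔ 0 < ν k := fun k => Set.ext_iff.mp hpos k
  have hj1 : μ j ≠ 1 := by have := hposk j; omega
  have hstep : IsLadderStep μ (μ + Pi.single i 1 - Pi.single j 1) := ⟨i, j, hij, hj1, rfl⟩
  refine .head hstep (ih _ ?_ (hstep.sum_eq.trans hsum) ?_ rfl)
  · rw [← hn]
    refine Finset.sum_lt_sum (fun k _ => ?_) ⟨j, Finset.mem_univ j, ?_⟩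
    · rw [add_single_sub_single_apply]
      split_ifs with hki hkj <;> subst_vars <;> first | exact absurd rfl hij | omega
    · rw [add_single_sub_single_apply, if_neg hij.symm, if_pos rfl]
      omega
  · ext k
    have := hposk k
    simp only [Set.mem_ofPred_eq, add_single_sub_single_apply]
    split_ifs with hki hkj <;> subst_vars <;> first | exact absurd rfl hij | omega

end LadderSteps

section LadderRepresentation

variable {n K : Type*} [DecidableEq n] [Field K]
  (ρ : Matrix n n K →ₗ[K] Module.End K ((n → ℤ) →₀ K))

lemma forall_mem_of_forall_single [Fintype n] {W : Submodule K ((n → ℤ) →₀ K)}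
    (h : ∀ i j, ∀ v ∈ W, ρ (Matrix.single i j 1) v ∈ W) :
    ∀ x, ∀ v ∈ W, ρ x v ∈ W := by
  intro x v hv
  rw [Matrix.matrix_eq_sum_single x]
  simp only [map_sum, LinearMap.sum_apply]
  refine W.sum_mem fun i _ => W.sum_mem fun j _ => ?_
  rw [show Matrix.single i j (x i j) = x i j • Matrix.single i j 1 by simp [Matrix.smul_single],
    map_smul, LinearMap.smul_apply]
  exact W.smul_mem _ (h i j v hv)

lemma forall_mem_supported [Fintype n]
    (hρ₁ : ∀ i j, i ≠ j → ∀ μ : n → ℤ, ρ (Matrix.single i j 1) (single μ 1) =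
      (μ j - 1) • single (μ + Pi.single i 1 - Pi.single j 1) (1 : K))
    (hρ₂ : ∀ k (μ : n → ℤ), ρ (Matrix.single k k 1) (single μ 1) = μ k • single μ (1 : K))
    {S : Set (n → ℤ)} (hS : ∀ μ μ', IsLadderStep μ μ' → μ ∈ S → μ' ∈ S) :
    ∀ x, ∀ v ∈ supported K K S, ρ x v ∈ supported K K S := by
  refine forall_mem_of_forall_single ρ fun i j => ?_
  suffices supported K K S ≤ (supported K K S).comap (ρ (Matrix.single i j 1)) from
    fun v hv => this hv
  rw [supported_eq_span_single, Submodule.span_le]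
  rintro _ ⟨μ, hμ, rfl⟩
  rw [SetLike.mem_coe, Submodule.mem_comap, ← supported_eq_span_single]
  rcases eq_or_ne i j with rfl | hij
  · rw [hρ₂]
    exact Submodule.smul_of_tower_mem _ _ (single_mem_supported K _ hμ)
  · rw [hρ₁ i j hij]
    by_cases hj : μ j = 1
    · simp [hj]
    · exact Submodule.smul_of_tower_mem _ _
        (single_mem_supported K _ (hS _ _ ⟨i, j, hij, hj, rfl⟩ hμ))

lemma single_mem_of_mem_support_of_forall_mem [CharZero K]
    (hρ₂ : ∀ k (μ : n → ℤ), ρ (Matrix.single k k 1) (single μ 1) = μ k • single μ (1 : K))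
    {W : Submodule K ((n → ℤ) →₀ K)} (hW : ∀ x, ∀ v ∈ W, ρ x v ∈ W)
    {v : (n → ℤ) →₀ K} (hv : v ∈ W) {μ : n → ℤ} (hμ : μ ∈ v.support) : single μ 1 ∈ W :=
  single_mem_of_mem_support (fun k => ρ (Matrix.single k k 1)) (fun μ k => (μ k : K))
    (fun _ _ h => funext fun k => Int.cast_injective (congr_fun h k))
    (fun k μ => by rw [hρ₂, Int.cast_smul_eq_zsmul]) (fun _ => hW _) hv hμ

lemma single_mem_of_reflTransGen [CharZero K]
    (hρ₁ : ∀ i j, i ≠ j → ∀ μ : n → ℤ, ρ (Matrix.single i j 1) (single μ 1) =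
      (μ j - 1) • single (μ + Pi.single i 1 - Pi.single j 1) (1 : K))
    {W : Submodule K ((n → ℤ) →₀ K)} (hW : ∀ x, ∀ v ∈ W, ρ x v ∈ W)
    {μ ν : n → ℤ} (h : Relation.ReflTransGen IsLadderStep μ ν)
    (hμ : single μ 1 ∈ W) : single ν 1 ∈ W := by
  induction h with
  | refl => exact hμ
  | @tail κ _ _ hstep ih =>
    obtain ⟨i, j, hij, hj, rfl⟩ := hstep
    have hc : ((κ j - 1 : ℤ) : K) ≠ 0 := Int.cast_ne_zero.mpr (sub_ne_zero.mpr hj)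
    have := W.smul_mem ((κ j - 1 : ℤ) : K)⁻¹ (hW (Matrix.single i j 1) _ ih)
    rwa [hρ₁ i j hij, ← Int.cast_smul_eq_zsmul K, smul_smul, inv_mul_cancel₀ hc,
      one_smul] at this

end LadderRepresentation

theorem stmt_9_general (K : Type) [Field K] [CharZero K] (d : ℕ)
    (ρ : Matrix (Fin (d+1)) (Fin (d+1)) K →ₗ[K]
        Module.End K ((Fin (d+1) → ℤ) →₀ K))
    (hρ₁ : ∀ (i j : Fin (d+1)), i ≠ j → ∀ μ : Fin (d+1) → ℤ,
      ρ (Matrix.single i j (1:K)) (Finsupp.single μ (1:K)) =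
        (μ j - 1) • Finsupp.single (μ + Pi.single i 1 - Pi.single j 1) (1:K))
    (hρ₂ : ∀ (k : Fin (d+1)) (μ : Fin (d+1) → ℤ),
      ρ (Matrix.single k k (1:K)) (Finsupp.single μ (1:K)) =
        μ k • Finsupp.single μ (1:K))
    (J : Set (Fin (d+1)))
    (M N : Submodule K ((Fin (d+1) → ℤ) →₀ K))
    (hM : M = Submodule.span K {w : (Fin (d+1) → ℤ) →₀ K | ∃ μ : Fin (d+1) → ℤ,
        (∑ k, μ k) = 0 ∧ J ⊆ {k | 0 < μ k} ∧ w = Finsupp.single μ (1:K)})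
    (hN : N = Submodule.span K {w : (Fin (d+1) → ℤ) →₀ K | ∃ μ : Fin (d+1) → ℤ,
        (∑ k, μ k) = 0 ∧ J ⊆ {k | 0 < μ k} ∧ J ≠ {k | 0 < μ k} ∧
        w = Finsupp.single μ (1:K)}) :
    N ≤ M ∧
    (∀ x : Matrix (Fin (d+1)) (Fin (d+1)) K, ∀ v ∈ M, ρ x v ∈ M) ∧
    (∀ x : Matrix (Fin (d+1)) (Fin (d+1)) K, ∀ v ∈ N, ρ x v ∈ N) ∧
    (∀ W : Submodule K ((Fin (d+1) → ℤ) →₀ K), N ≤ W → W ≤ M →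
      (∀ x : Matrix (Fin (d+1)) (Fin (d+1)) K, ∀ v ∈ W, ρ x v ∈ W) →
      W = N ∨ W = M) := by
  set SM := {μ : Fin (d+1) → ℤ | ∑ k, μ k = 0 ∧ J ⊆ {k | 0 < μ k}}
  set SN := {μ : Fin (d+1) → ℤ | ∑ k, μ k = 0 ∧ J ⊆ {k | 0 < μ k} ∧ J ≠ {k | 0 < μ k}}
  replace hM : M = supported K K SM := by
    rw [hM, supported_eq_span_single]; congr 1; ext; simp [SM, and_assoc, eq_comm]
  replace hN : N = supported K K SN := by
    rw [hN, supported_eq_span_single]; congr 1; ext; simp [SN, and_assoc, eq_comm]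
  refine ⟨hM ▸ hN ▸ supported_mono fun μ hμ => ⟨hμ.1, hμ.2.1⟩, ?_, ?_, ?_⟩
  · exact hM ▸ forall_mem_supported ρ hρ₁ hρ₂ fun μ μ' h hμ =>
      ⟨h.sum_eq.trans hμ.1, hμ.2.trans h.setOf_pos_subset⟩
  · exact hN ▸ forall_mem_supported ρ hρ₁ hρ₂ fun μ μ' h hμ =>
      ⟨h.sum_eq.trans hμ.1, hμ.2.1.trans h.setOf_pos_subset,
        fun hJ => hμ.2.2 (hμ.2.1.antisymm (hJ ▸ h.setOf_pos_subset))⟩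
  intro W hNW hWM hW
  by_cases hWN : W ≤ N
  · exact .inl (le_antisymm hWN hNW)
  obtain ⟨v, hvW, hvN⟩ := SetLike.not_le_iff_exists.mp hWN
  obtain ⟨μ₀, hμ₀v, hμ₀N⟩ : ∃ μ₀ ∈ v.support, μ₀ ∉ SN := by
    simpa [hN, mem_supported, Set.subset_def] using hvN
  have hμ₀M : μ₀ ∈ SM := (mem_supported K v).mp (hM ▸ hWM hvW) hμ₀v
  have hJμ₀ : J = {k | 0 < μ₀ k} := not_not.mp fun h => hμ₀N ⟨hμ₀M.1, hμ₀M.2, h⟩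
  refine .inr (le_antisymm hWM ?_)
  rw [hM, supported_eq_span_single, Submodule.span_le]
  rintro _ ⟨ν, hνM, rfl⟩
  by_cases hνN : ν ∈ SN
  · exact hNW (hN ▸ single_mem_supported K 1 hνN)
  have hJν : J = {k | 0 < ν k} := not_not.mp fun h => hνN ⟨hνM.1, hνM.2, h⟩
  exact single_mem_of_reflTransGen ρ hρ₁ hW
    (reflTransGen_isLadderStep (hμ₀M.1.trans hνM.1.symm) (hJμ₀.symm.trans hJν))
    (single_mem_of_mem_support_of_forall_mem ρ hρ₂ hW hvW hμ₀v)

/-- For J a nonempty proper subset of {0,…,d}, with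
M = span{δ_μ : Σμ = 0, J ⊆ J(μ)} and N = span{δ_μ : Σμ = 0, J ⊊ J(μ)}, one has
N ⊆ M, both are ρ(𝔤)-stable, and every ρ(𝔤)-stable subspace between N and M equals
N or M (irreducibility of 𝔟_J/𝔟_J^>). -/
theorem stmt_9 (K : Type) [Field K] [CharZero K] (d : ℕ) (hd : 1 ≤ d)
    (ρ : Matrix (Fin (d+1)) (Fin (d+1)) K →ₗ[K]
        Module.End K ((Fin (d+1) → ℤ) →₀ K))
    (hρ₁ : ∀ (i j : Fin (d+1)), i ≠ j → ∀ μ : Fin (d+1) → ℤ,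
      ρ (Matrix.single i j (1:K)) (Finsupp.single μ (1:K)) =
        (μ j - 1) • Finsupp.single (μ + Pi.single i 1 - Pi.single j 1) (1:K))
    (hρ₂ : ∀ (k : Fin (d+1)) (μ : Fin (d+1) → ℤ),
      ρ (Matrix.single k k (1:K)) (Finsupp.single μ (1:K)) =
        μ k • Finsupp.single μ (1:K))
    (J : Set (Fin (d+1))) (hJ : J.Nonempty) (hJ' : J ≠ Set.univ)
    (M N : Submodule K ((Fin (d+1) → ℤ) →₀ K))
    (hM : M = Submodule.span K {w : (Fin (d+1) → ℤ) →₀ K | ∃ μ : Fin (d+1) → ℤ,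
        (∑ k, μ k) = 0 ∧ J ⊆ {k | 0 < μ k} ∧ w = Finsupp.single μ (1:K)})
    (hN : N = Submodule.span K {w : (Fin (d+1) → ℤ) →₀ K | ∃ μ : Fin (d+1) → ℤ,
        (∑ k, μ k) = 0 ∧ J ⊆ {k | 0 < μ k} ∧ J ≠ {k | 0 < μ k} ∧
        w = Finsupp.single μ (1:K)}) :
    N ≤ M ∧
    (∀ x : Matrix (Fin (d+1)) (Fin (d+1)) K, ∀ v ∈ M, ρ x v ∈ M) ∧
    (∀ x : Matrix (Fin (d+1)) (Fin (d+1)) K, ∀ v ∈ N, ρ x v ∈ N) ∧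
    (∀ W : Submodule K ((Fin (d+1) → ℤ) →₀ K), N ≤ W → W ≤ M →
      (∀ x : Matrix (Fin (d+1)) (Fin (d+1)) K, ∀ v ∈ W, ρ x v ∈ W) →
      W = N ∨ W = M) :=
  stmt_9_general K d ρ hρ₁ hρ₂ J M N hM hN
end

section
/- Let J be a nonempty proper subset of {0,…,d}. Then A_J ∩ 𝔟 = {z ∈ A_J : ρ'(z)(δ_0) = 0} is equal to the ideal of the (commutative) algebra A_J generated by the sorting relations ι(E_{ij})ι(E_{kl}) − ι(E_{il})ι(E_{kj}) with i, k ∈ J and j, l ∉ J. -/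
/-!
The generators `x_{ij} = ι(E_{ij})`, `(i, j) ∈ J × Jᶜ`, of `A_J` commute, so a monomial in them
is a list of such pairs up to order. A monomial sends `δ₀` to a nonzero integer multiple of `δ_ν`
(no `j ∉ J` is ever a row index, so each factor `μ(j) - 1` is negative), and since `J` and `Jᶜ`
are disjoint the weight `ν = ∑ (ε_i - ε_j)` records the multisets of row and of column indices.
Two monomials with the same such multisets differ by an element of the sorting ideal: one
sorting relation makes them share a factor, and one inducts on the degree. Choosing a monomial
of each weight gives a linear map `σ` with `z - σ(z · δ₀)` in the sorting ideal for all
`z ∈ A_J`, so `z · δ₀ = 0` forces `z` into the ideal. Conversely the sorting relations kill `δ₀`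
by a direct computation.
-/

open UniversalEnvelopingAlgebra

attribute [local instance 100] LieRing.ofAssociativeRing

theorem UniversalEnvelopingAlgebra.commute_ι_single {n R : Type*} [Fintype n] [DecidableEq n]
    [CommRing R] {i j k l : n} (hjk : j ≠ k) (hli : l ≠ i) (a b : R) :
    Commute (ι R (Matrix.single i j a)) (ι R (Matrix.single k l b)) := by
  rw [commute_iff_lie_eq, ← LieHom.map_lie, Ring.lie_def,
    Matrix.single_mul_single_of_ne (h := hjk), Matrix.single_mul_single_of_ne (h := hli),
    sub_zero, map_zero]

namespace SortingRelations

section SortingSpan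

variable {K R : Type*} [CommRing K] [Ring R] [Algebra K R] {α β : Type*}

def sortingSpan (A : Subalgebra K R) (x : α × β → R) : Submodule K R :=
  Submodule.span K
    {w | ∃ a ∈ A, ∃ i k j l, w = a * (x (i, j) * x (k, l) - x (i, l) * x (k, j))}

variable {A : Subalgebra K R} {x : α × β → R}

theorem prod_map_eq_of_perm (hx : ∀ p q, Commute (x p) (x q)) {L L' : List (α × β)}
    (h : L.Perm L') : (L.map x).prod = (L'.map x).prod :=
  (h.map x).prod_eq' (List.pairwise_map.2 (List.pairwise_of_forall fun p q => hx p q))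

theorem mul_mem_sortingSpan {a w : R} (ha : a ∈ A) (hw : w ∈ sortingSpan A x) :
    a * w ∈ sortingSpan A x := by
  induction hw using Submodule.span_induction with
  | mem w hw =>
    obtain ⟨b, hb, i, k, j, l, rfl⟩ := hw
    exact Submodule.subset_span ⟨a * b, mul_mem ha hb, i, k, j, l, (mul_assoc _ _ _).symm⟩
  | zero => simp
  | add u v _ _ hu hv => simpa only [mul_add] using add_mem hu hv
  | smul c u _ hu => simpa only [mul_smul_comm] using Submodule.smul_mem _ c hu

theorem sortingSpan_le_toSubmodule (hA : ∀ p, x p ∈ A) :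
    sortingSpan A x ≤ Subalgebra.toSubmodule A := by
  rw [sortingSpan, Submodule.span_le]
  rintro _ ⟨a, ha, i, k, j, l, rfl⟩
  exact (Subalgebra.mem_toSubmodule A).2
    (mul_mem ha (sub_mem (mul_mem (hA _) (hA _)) (mul_mem (hA _) (hA _))))

theorem exists_perm_cons_sub_mem_sortingSpan (hx : ∀ p q, Commute (x p) (x q))
    (hA : ∀ p, x p ∈ A) {i : α} {j : β} {L : List (α × β)} (hi : i ∈ L.map Prod.fst)
    (hj : j ∈ L.map Prod.snd) :
    ∃ M : List (α × β), (L.map Prod.fst).Perm (i :: M.map Prod.fst) ∧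
      (L.map Prod.snd).Perm (j :: M.map Prod.snd) ∧
      x (i, j) * (M.map x).prod - (L.map x).prod ∈ sortingSpan A x := by
  classical
  obtain ⟨⟨i', j'⟩, hmem, hi'⟩ := List.mem_map.1 hi
  obtain rfl : i = i' := hi'.symm
  have hL := List.perm_cons_erase hmem
  by_cases hjj' : j' = j
  · subst j'
    refine ⟨L.erase (i, j), by simpa using hL.map Prod.fst, by simpa using hL.map Prod.snd, ?_⟩
    rw [prod_map_eq_of_perm hx hL, List.map_cons, List.prod_cons, sub_self]
    exact zero_mem _
  have hj' : j ∈ (L.erase (i, j')).map Prod.snd := by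
    simpa [Ne.symm hjj'] using (hL.map Prod.snd).subset hj
  obtain ⟨⟨k, j''⟩, hmem', hj''⟩ := List.mem_map.1 hj'
  obtain rfl : j = j'' := hj''.symm
  -- one sorting relation trades the factors `x (i, j') x (k, j)` of `L` for `x (i, j) x (k, j')`
  set L₃ := (L.erase (i, j')).erase (k, j)
  have hperm : L.Perm ((i, j') :: (k, j) :: L₃) := hL.trans ((List.perm_cons_erase hmem').cons _)
  refine ⟨(k, j') :: L₃, by simpa using hperm.map Prod.fst,
    by simpa using (hperm.map Prod.snd).trans (List.Perm.swap _ _ _), ?_⟩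
  have hrel : (L₃.map x).prod * (x (i, j) * x (k, j') - x (i, j') * x (k, j)) ∈
      sortingSpan A x :=
    Submodule.subset_span ⟨_, Subalgebra.list_prod_mem _ fun y hy => by
      obtain ⟨p, -, rfl⟩ := List.mem_map.1 hy; exact hA p, i, k, j, j', rfl⟩
  have hmove (p q : α × β) :
      x p * (x q * (L₃.map x).prod) = (L₃.map x).prod * (x p * x q) := by
    simpa [mul_assoc] using
      prod_map_eq_of_perm hx (List.perm_append_comm (l₁ := [p, q]) (l₂ := L₃))
  rw [prod_map_eq_of_perm hx hperm]
  simpa only [List.map_cons, List.prod_cons, hmove, mul_sub] using hrel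

theorem sub_mem_sortingSpan_of_perm (hx : ∀ p q, Commute (x p) (x q)) (hA : ∀ p, x p ∈ A)
    {L L' : List (α × β)} (h₁ : (L.map Prod.fst).Perm (L'.map Prod.fst))
    (h₂ : (L.map Prod.snd).Perm (L'.map Prod.snd)) :
    (L.map x).prod - (L'.map x).prod ∈ sortingSpan A x := by
  induction L generalizing L' with
  | nil =>
    obtain rfl : L' = [] := by simpa using h₁.symm.eq_nil
    simp
  | cons p T ih =>
    obtain ⟨M, hM₁, hM₂, hM⟩ := exists_perm_cons_sub_mem_sortingSpan (A := A) hx hA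
      (h₁.subset (List.mem_map_of_mem List.mem_cons_self))
      (h₂.subset (List.mem_map_of_mem List.mem_cons_self))
    have hT := ih (L' := M) (by simpa using h₁.trans hM₁) (by simpa using h₂.trans hM₂)
    have hsplit : x p * (T.map x).prod - (L'.map x).prod =
        x p * ((T.map x).prod - (M.map x).prod) + (x p * (M.map x).prod - (L'.map x).prod) := by
      noncomm_ring
    rw [List.map_cons, List.prod_cons, hsplit]
    exact add_mem (mul_mem_sortingSpan (hA p) hT) hM

theorem toSubmodule_adjoin_range_le_span_prod {ι : Type*} (x : ι → R) :
    Subalgebra.toSubmodule (Algebra.adjoin K (Set.range x)) ≤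
      Submodule.span K (Set.range fun L : List ι => (L.map x).prod) := by
  rw [Algebra.adjoin_eq_span]
  refine Submodule.span_mono fun z hz => ?_
  induction hz using Submonoid.closure_induction with
  | mem _ h =>
    obtain ⟨p, rfl⟩ := h
    exact ⟨[p], by simp⟩
  | one => exact ⟨[], rfl⟩
  | mul _ _ _ _ h₁ h₂ =>
    obtain ⟨⟨L₁, rfl⟩, ⟨L₂, rfl⟩⟩ := And.intro h₁ h₂
    exact ⟨L₁ ++ L₂, by simp⟩

end SortingSpan

section Weights

variable {n : Type*} [DecidableEq n] (J : Set n)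

def weight (L : List (J × ↥Jᶜ)) : n → ℤ :=
  (L.map fun p => Pi.single (p.1 : n) 1 - Pi.single (p.2 : n) 1).sum

def actionCoeff : List (J × ↥Jᶜ) → ℤ
  | [] => 1
  | p :: T => (weight J T p.2 - 1) * actionCoeff T

variable {J}

@[simp]
theorem weight_nil : weight J [] = 0 := rfl

@[simp]
theorem weight_cons (p : J × ↥Jᶜ) (T : List (J × ↥Jᶜ)) :
    weight J (p :: T) = Pi.single (p.1 : n) 1 - Pi.single (p.2 : n) 1 + weight J T := by
  simp [weight]

theorem weight_apply_fst (L : List (J × ↥Jᶜ)) (i : J) :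
    weight J L i = (L.map Prod.fst).count i := by
  induction L with
  | nil => simp
  | cons p T ih =>
    have : (p.2 : n) ≠ i := fun h => p.2.2 (h ▸ i.2)
    rcases eq_or_ne p.1 i with rfl | h
    · simp [ih, this, add_comm]
    · simp [ih, this, h, Subtype.coe_ne_coe.2 h.symm]

theorem weight_apply_snd (L : List (J × ↥Jᶜ)) (j : ↥Jᶜ) :
    weight J L j = -(L.map Prod.snd).count j := by
  induction L with
  | nil => simp
  | cons p T ih =>
    have : (p.1 : n) ≠ j := fun h => j.2 (h ▸ p.1.2)
    rcases eq_or_ne p.2 j with rfl | h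
    · simp [ih, this]
    · simp [ih, this, h, Subtype.coe_ne_coe.2 h.symm]

theorem actionCoeff_ne_zero (L : List (J × ↥Jᶜ)) : actionCoeff J L ≠ 0 := by
  induction L with
  | nil => simp [actionCoeff]
  | cons p T ih =>
    rw [actionCoeff, weight_apply_snd]
    exact mul_ne_zero (by omega) ih

theorem perm_of_weight_eq {L L' : List (J × ↥Jᶜ)} (h : weight J L = weight J L') :
    (L.map Prod.fst).Perm (L'.map Prod.fst) ∧ (L.map Prod.snd).Perm (L'.map Prod.snd) := by
  refine ⟨List.perm_iff_count.2 fun i => ?_, List.perm_iff_count.2 fun j => ?_⟩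
  · simpa [weight_apply_fst] using congrFun h i
  · simpa [weight_apply_snd] using congrFun h j

end Weights

section Action

variable {n : Type*} [Fintype n] [DecidableEq n] (J : Set n) (K : Type*) [CommRing K]

noncomputable def nilradicalGen (p : J × ↥Jᶜ) : UniversalEnvelopingAlgebra K (Matrix n n K) :=
  ι K (Matrix.single (p.1 : n) (p.2 : n) (1 : K))

/-- The algebra `A_J`. -/
noncomputable abbrev nilradicalAlgebra :
    Subalgebra K (UniversalEnvelopingAlgebra K (Matrix n n K)) :=
  Algebra.adjoin K (Set.range (nilradicalGen J K))

def OffDiagActionFormula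
    (ρ' : UniversalEnvelopingAlgebra K (Matrix n n K) →ₐ[K] Module.End K ((n → ℤ) →₀ K)) :
    Prop :=
  ∀ (i j : n), i ≠ j → ∀ ν : n → ℤ,
    ρ' (ι K (Matrix.single i j (1:K))) (Finsupp.single ν (1:K)) =
      (ν j - 1) • Finsupp.single (ν + Pi.single i 1 - Pi.single j 1) (1:K)

variable {J K}

theorem commute_nilradicalGen (p q : J × ↥Jᶜ) :
    Commute (nilradicalGen J K p) (nilradicalGen J K q) :=
  commute_ι_single (fun h : (p.2 : n) = q.1 => p.2.2 (h ▸ q.1.2))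
    (fun h : (q.2 : n) = p.1 => q.2.2 (h ▸ p.1.2)) _ _

theorem nilradicalGen_mem (p : J × ↥Jᶜ) : nilradicalGen J K p ∈ nilradicalAlgebra J K :=
  Algebra.subset_adjoin ⟨p, rfl⟩

theorem apply_prod_nilradicalGen_single_zero
    {ρ' : UniversalEnvelopingAlgebra K (Matrix n n K) →ₐ[K] Module.End K ((n → ℤ) →₀ K)}
    (hρ' : OffDiagActionFormula K ρ') (L : List (J × ↥Jᶜ)) :
    ρ' (L.map (nilradicalGen J K)).prod (Finsupp.single 0 1) =
      actionCoeff J L • Finsupp.single (weight J L) 1 := by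
  induction L with
  | nil => simp [actionCoeff]
  | cons p T ih =>
    have hp : (p.1 : n) ≠ p.2 := fun h => p.2.2 (h ▸ p.1.2)
    rw [List.map_cons, List.prod_cons, map_mul, Module.End.mul_apply, ih, map_zsmul,
      nilradicalGen, hρ' _ _ hp, smul_smul, actionCoeff, weight_cons, mul_comm]
    congr 2
    abel

theorem range_nilradicalGen :
    Set.range (nilradicalGen J K) =
      {w | ∃ i ∈ J, ∃ j ∉ J, w = ι K (Matrix.single i j (1:K))} := by
  ext w
  constructor
  · rintro ⟨⟨i, j⟩, rfl⟩
    exact ⟨i, i.2, j, j.2, rfl⟩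
  · rintro ⟨i, hi, j, hj, rfl⟩
    exact ⟨(⟨i, hi⟩, ⟨j, hj⟩), rfl⟩

theorem sortingSpan_nilradicalGen
    (A : Subalgebra K (UniversalEnvelopingAlgebra K (Matrix n n K))) :
    sortingSpan A (nilradicalGen J K) = Submodule.span K
      {w | ∃ a ∈ A, ∃ i ∈ J, ∃ k ∈ J, ∃ j ∉ J, ∃ l ∉ J,
        w = a * (ι K (Matrix.single i j (1:K)) * ι K (Matrix.single k l (1:K)) -
          ι K (Matrix.single i l (1:K)) * ι K (Matrix.single k j (1:K)))} := by
  rw [sortingSpan]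
  congr 1
  ext w
  constructor
  · rintro ⟨a, ha, i, k, j, l, rfl⟩
    exact ⟨a, ha, i, i.2, k, k.2, j, j.2, l, l.2, rfl⟩
  · rintro ⟨a, ha, i, hi, k, hk, j, hj, l, hl, rfl⟩
    exact ⟨a, ha, ⟨i, hi⟩, ⟨k, hk⟩, ⟨j, hj⟩, ⟨l, hl⟩, rfl⟩

end Action

section Orbit

variable {n : Type*} [Fintype n] [DecidableEq n] {J : Set n} {K : Type*} [Field K]

noncomputable def orbitMap
    (ρ' : UniversalEnvelopingAlgebra K (Matrix n n K) →ₐ[K] Module.End K ((n → ℤ) →₀ K)) :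
    UniversalEnvelopingAlgebra K (Matrix n n K) →ₗ[K] (n → ℤ) →₀ K :=
  LinearMap.applyₗ (Finsupp.single 0 1) ∘ₗ ρ'.toLinearMap

@[simp]
theorem orbitMap_apply
    (ρ' : UniversalEnvelopingAlgebra K (Matrix n n K) →ₐ[K] Module.End K ((n → ℤ) →₀ K))
    (z : UniversalEnvelopingAlgebra K (Matrix n n K)) :
    orbitMap ρ' z = ρ' z (Finsupp.single 0 1) := rfl

variable (J K) in
/-- Sends `δ_ν` to a chosen monomial of weight `ν`, divided by its coefficient, so that it
inverts `orbitMap` on monomials. -/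
noncomputable def weightSection :
    ((n → ℤ) →₀ K) →ₗ[K] UniversalEnvelopingAlgebra K (Matrix n n K) :=
  Finsupp.linearCombination K fun ν =>
    let L := Function.invFun (weight J) ν
    (actionCoeff J L : K)⁻¹ • (L.map (nilradicalGen J K)).prod

variable {ρ' : UniversalEnvelopingAlgebra K (Matrix n n K) →ₐ[K] Module.End K ((n → ℤ) →₀ K)}

theorem sortingSpan_le_ker_orbitMap (hρ' : OffDiagActionFormula K ρ')
    (A : Subalgebra K (UniversalEnvelopingAlgebra K (Matrix n n K))) :
    sortingSpan A (nilradicalGen J K) ≤ LinearMap.ker (orbitMap ρ') := by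
  rw [sortingSpan, Submodule.span_le]
  rintro _ ⟨a, -, i, k, j, l, rfl⟩
  have h₁ := apply_prod_nilradicalGen_single_zero hρ' [(i, j), (k, l)]
  have h₂ := apply_prod_nilradicalGen_single_zero hρ' [(i, l), (k, j)]
  have hweight : weight J [(i, j), (k, l)] = weight J [(i, l), (k, j)] := by
    simp only [weight_cons, weight_nil]
    abel
  have hcoeff : actionCoeff J [(i, j), (k, l)] = actionCoeff J [(i, l), (k, j)] := by
    rcases eq_or_ne j l with rfl | h
    · rfl
    · simp [actionCoeff, weight_apply_snd, h, h.symm]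
  simp only [List.map_cons, List.map_nil, List.prod_cons, List.prod_nil, mul_one] at h₁ h₂
  rw [SetLike.mem_coe, LinearMap.mem_ker, orbitMap_apply, map_mul, Module.End.mul_apply,
    map_sub, LinearMap.sub_apply, h₁, h₂, hweight, hcoeff, sub_self, map_zero]

theorem sub_weightSection_orbitMap_mem_sortingSpan [CharZero K]
    (hρ' : OffDiagActionFormula K ρ')
    {z : UniversalEnvelopingAlgebra K (Matrix n n K)} (hz : z ∈ nilradicalAlgebra J K) :
    z - weightSection J K (orbitMap ρ' z) ∈
      sortingSpan (nilradicalAlgebra J K) (nilradicalGen J K) := by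
  set x := nilradicalGen J K
  set S := sortingSpan (nilradicalAlgebra J K) x
  suffices h : Submodule.span K (Set.range fun L : List (J × ↥Jᶜ) => (L.map x).prod) ≤
      S.comap (LinearMap.id - weightSection J K ∘ₗ orbitMap ρ') from
    h (toSubmodule_adjoin_range_le_span_prod x hz)
  rw [Submodule.span_le]
  rintro _ ⟨L, rfl⟩
  set r := Function.invFun (weight J) (weight J L)
  have hr : weight J r = weight J L := Function.invFun_eq ⟨L, rfl⟩
  have hsub : (L.map x).prod - (r.map x).prod ∈ S :=
    sub_mem_sortingSpan_of_perm commute_nilradicalGen nilradicalGen_mem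
      (perm_of_weight_eq hr).1.symm (perm_of_weight_eq hr).2.symm
  -- the relations kill `δ₀`, so `L` and `r` have the same `actionCoeff`
  have horbit : orbitMap ρ' (L.map x).prod = orbitMap ρ' (r.map x).prod :=
    sub_eq_zero.1 (by rw [← map_sub]; exact sortingSpan_le_ker_orbitMap hρ' _ hsub)
  have hsection : weightSection J K (orbitMap ρ' (L.map x).prod) = (r.map x).prod := by
    rw [horbit, orbitMap_apply, apply_prod_nilradicalGen_single_zero hρ', map_zsmul,
      weightSection, Finsupp.linearCombination_single, hr, one_smul, ← Int.cast_smul_eq_zsmul K,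
      smul_smul, mul_inv_cancel₀ (Int.cast_ne_zero.2 (actionCoeff_ne_zero r)), one_smul]
  simpa only [SetLike.mem_coe, Submodule.mem_comap, LinearMap.sub_apply, LinearMap.id_apply,
    LinearMap.comp_apply, hsection] using hsub

theorem mem_sortingSpan_nilradicalGen_iff [CharZero K] (hρ' : OffDiagActionFormula K ρ')
    {z : UniversalEnvelopingAlgebra K (Matrix n n K)} :
    z ∈ sortingSpan (nilradicalAlgebra J K) (nilradicalGen J K) ↔
      z ∈ nilradicalAlgebra J K ∧ orbitMap ρ' z = 0 := by
  refine ⟨fun hz => ⟨?_, sortingSpan_le_ker_orbitMap hρ' _ hz⟩, fun ⟨hzA, hz0⟩ => ?_⟩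
  · exact sortingSpan_le_toSubmodule nilradicalGen_mem hz
  · simpa [hz0] using sub_weightSection_orbitMap_mem_sortingSpan hρ' hzA

end Orbit

end SortingRelations

theorem stmt_10_general (K : Type) [Field K] [CharZero K] (d : ℕ)
    (ρ' : UniversalEnvelopingAlgebra K (Matrix (Fin (d+1)) (Fin (d+1)) K) →ₐ[K]
        Module.End K ((Fin (d+1) → ℤ) →₀ K))
    (hρ'₁ : ∀ (i j : Fin (d+1)), i ≠ j → ∀ ν : Fin (d+1) → ℤ,
      ρ' (ι K (Matrix.single i j (1:K))) (Finsupp.single ν (1:K)) =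
        (ν j - 1) • Finsupp.single (ν + Pi.single i 1 - Pi.single j 1) (1:K))
    (J : Set (Fin (d+1)))
    (AJ : Subalgebra K (UniversalEnvelopingAlgebra K (Matrix (Fin (d+1)) (Fin (d+1)) K)))
    (hAJ : AJ = Algebra.adjoin K
      {w | ∃ i ∈ J, ∃ j ∉ J, w = ι K (Matrix.single i j (1:K))}) :
    {z : UniversalEnvelopingAlgebra K (Matrix (Fin (d+1)) (Fin (d+1)) K) |
        z ∈ AJ ∧ ρ' z (Finsupp.single (0 : Fin (d+1) → ℤ) (1:K)) = 0} =
      ↑(Submodule.span K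
        {w : UniversalEnvelopingAlgebra K (Matrix (Fin (d+1)) (Fin (d+1)) K) |
          ∃ a ∈ AJ, ∃ i ∈ J, ∃ k ∈ J, ∃ j ∉ J, ∃ l ∉ J,
            w = a * (ι K (Matrix.single i j (1:K)) *
                      ι K (Matrix.single k l (1:K)) -
                     ι K (Matrix.single i l (1:K)) *
                      ι K (Matrix.single k j (1:K)))}) := by
  rw [← SortingRelations.range_nilradicalGen] at hAJ
  subst hAJ
  ext z
  rw [← SortingRelations.sortingSpan_nilradicalGen, SetLike.mem_coe,
    SortingRelations.mem_sortingSpan_nilradicalGen_iff hρ'₁]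
  rfl

/-- For J a nonempty proper subset of {0,…,d}, A_J ∩ 𝔟 equals the
ideal of the commutative algebra A_J = K⟨ι(E_{ij}) : i ∈ J, j ∉ J⟩ generated by the
sorting relations ι(E_{ij})ι(E_{kl}) − ι(E_{il})ι(E_{kj}) with i,k ∈ J and j,l ∉ J;
this ideal is the K-span of the products a·(relation) with a ∈ A_J. -/
theorem stmt_10 (K : Type) [Field K] [CharZero K] (d : ℕ) (hd : 1 ≤ d)
    (ρ' : UniversalEnvelopingAlgebra K (Matrix (Fin (d+1)) (Fin (d+1)) K) →ₐ[K]
        Module.End K ((Fin (d+1) → ℤ) →₀ K))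
    (hρ'₁ : ∀ (i j : Fin (d+1)), i ≠ j → ∀ ν : Fin (d+1) → ℤ,
      ρ' (ι K (Matrix.single i j (1:K))) (Finsupp.single ν (1:K)) =
        (ν j - 1) • Finsupp.single (ν + Pi.single i 1 - Pi.single j 1) (1:K))
    (hρ'₂ : ∀ (k : Fin (d+1)) (ν : Fin (d+1) → ℤ),
      ρ' (ι K (Matrix.single k k (1:K))) (Finsupp.single ν (1:K)) =
        ν k • Finsupp.single ν (1:K))
    (J : Set (Fin (d+1))) (hJ : J.Nonempty) (hJ' : J ≠ Set.univ)
    (AJ : Subalgebra K (UniversalEnvelopingAlgebra K (Matrix (Fin (d+1)) (Fin (d+1)) K)))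
    (hAJ : AJ = Algebra.adjoin K
      {w | ∃ i ∈ J, ∃ j ∉ J, w = ι K (Matrix.single i j (1:K))}) :
    {z : UniversalEnvelopingAlgebra K (Matrix (Fin (d+1)) (Fin (d+1)) K) |
        z ∈ AJ ∧ ρ' z (Finsupp.single (0 : Fin (d+1) → ℤ) (1:K)) = 0} =
      ↑(Submodule.span K
        {w : UniversalEnvelopingAlgebra K (Matrix (Fin (d+1)) (Fin (d+1)) K) |
          ∃ a ∈ AJ, ∃ i ∈ J, ∃ k ∈ J, ∃ j ∉ J, ∃ l ∉ J,
            w = a * (ι K (Matrix.single i j (1:K)) *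
                      ι K (Matrix.single k l (1:K)) -
                     ι K (Matrix.single i l (1:K)) *
                      ι K (Matrix.single k j (1:K)))}) :=
  stmt_10_general K d ρ' hρ'₁ J AJ hAJ
end

section
/- Let J be a nonempty proper subset of {0,…,d}. If z ∈ A_J and ρ'(z)(δ_0) lies in span_K{δ_μ : J ⊆ J(μ) and J ≠ J(μ)}, then ρ'(z)(δ_0) = 0. -/
/-!
A generator `E_ij` of `A_J` (`i ∈ J`, `j ∉ J`) sends `δ_μ` to a multiple of `δ_{μ+ε_i-ε_j}`, and
`J(μ+ε_i-ε_j) ⊆ J(μ) ∪ {i}`. So `A_J` preserves the span of the `δ_μ` with `J(μ) ⊆ J`, which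
contains `δ_0`; this span meets the span of the `δ_μ` with `J ⊊ J(μ)` only in `0`.
-/

open UniversalEnvelopingAlgebra

attribute [local instance 100] LieRing.ofAssociativeRing LieAlgebra.ofAssociativeAlgebra

namespace Submodule

variable {R M : Type*} [CommSemiring R] [AddCommMonoid M] [Module R M]

def stabilizerSubalgebra (p : Submodule R M) : Subalgebra R (Module.End R M) where
  carrier := {f | p ≤ p.comap f}
  mul_mem' hf hg _ hx := hf (hg hx)
  add_mem' hf hg _ hx := p.add_mem (hf hx) (hg hx)
  algebraMap_mem' r _ hx := p.smul_mem r hx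

end Submodule

theorem Finsupp.supported_le_comap_of_forall_single {R α : Type*} [CommSemiring R]
    {s : Set α} {f : Module.End R (α →₀ R)} (hf : ∀ a ∈ s, f (single a 1) ∈ supported R R s) :
    supported R R s ≤ (supported R R s).comap f := by
  rw [supported_eq_span_single, Submodule.span_le]
  rintro _ ⟨a, ha, rfl⟩
  rw [← supported_eq_span_single]
  exact hf a ha

theorem posSupport_add_single_sub_single_subset {ι : Type*} [DecidableEq ι] (μ : ι → ℤ) (i j : ι) :
    {k | 0 < (μ + Pi.single i 1 - Pi.single j 1 : ι → ℤ) k} ⊆ insert i {k | 0 < μ k} := by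
  intro k hk
  by_cases hki : k = i
  · exact .inl hki
  · have hle : (μ + Pi.single i 1 - Pi.single j 1 : ι → ℤ) k ≤ μ k := by
      rcases eq_or_ne k j with rfl | hkj <;> simp [*]
    exact .inr (lt_of_lt_of_le hk hle)

theorem stmt_12_general (K : Type) [Field K] (d : ℕ)
    (ρ' : UniversalEnvelopingAlgebra K (Matrix (Fin (d+1)) (Fin (d+1)) K) →ₐ[K]
        Module.End K ((Fin (d+1) → ℤ) →₀ K))
    (hρ'₁ : ∀ (i j : Fin (d+1)), i ≠ j → ∀ ν : Fin (d+1) → ℤ,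
      ρ' (ι K (Matrix.single i j (1:K))) (Finsupp.single ν (1:K)) =
        (ν j - 1) • Finsupp.single (ν + Pi.single i 1 - Pi.single j 1) (1:K))
    (J : Set (Fin (d+1)))
    (AJ : Subalgebra K (UniversalEnvelopingAlgebra K (Matrix (Fin (d+1)) (Fin (d+1)) K)))
    (hAJ : AJ = Algebra.adjoin K
      {w | ∃ i ∈ J, ∃ j ∉ J, w = ι K (Matrix.single i j (1:K))})
    (z : UniversalEnvelopingAlgebra K (Matrix (Fin (d+1)) (Fin (d+1)) K))
    (hz : z ∈ AJ)
    (hzδ : ρ' z (Finsupp.single (0 : Fin (d+1) → ℤ) (1:K)) ∈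
      Submodule.span K {w : (Fin (d+1) → ℤ) →₀ K | ∃ μ : Fin (d+1) → ℤ,
        J ⊆ {k | 0 < μ k} ∧ J ≠ {k | 0 < μ k} ∧ w = Finsupp.single μ (1:K)}) :
    ρ' z (Finsupp.single (0 : Fin (d+1) → ℤ) (1:K)) = 0 := by
  classical
  set below : Set (Fin (d+1) → ℤ) := {μ | {k | 0 < μ k} ⊆ J}
  set above : Set (Fin (d+1) → ℤ) := {μ | J ⊆ {k | 0 < μ k} ∧ J ≠ {k | 0 < μ k}}
  have hgen : ∀ x ∈ {w | ∃ i ∈ J, ∃ j ∉ J, w = ι K (Matrix.single i j (1:K))},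
      ρ' x ∈ (Finsupp.supported K K below).stabilizerSubalgebra := by
    rintro _ ⟨i, hi, j, hj, rfl⟩
    refine Finsupp.supported_le_comap_of_forall_single fun μ hμ => ?_
    rw [hρ'₁ i j (ne_of_mem_of_not_mem hi hj)]
    exact Submodule.smul_of_tower_mem _ _ <| Finsupp.single_mem_supported K 1 <|
      (posSupport_add_single_sub_single_subset μ i j).trans (Set.insert_subset hi hμ)
  have hz' : ρ' z ∈ (Finsupp.supported K K below).stabilizerSubalgebra :=
    Algebra.adjoin_le (S := (Finsupp.supported K K below).stabilizerSubalgebra.comap ρ') hgen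
      (hAJ ▸ hz)
  have hbelow : ρ' z (Finsupp.single 0 1) ∈ Finsupp.supported K K below :=
    hz' (Finsupp.single_mem_supported K 1 fun k hk => (lt_irrefl (0 : ℤ) hk).elim)
  have habove : ρ' z (Finsupp.single 0 1) ∈ Finsupp.supported K K above := by
    rw [Finsupp.supported_eq_span_single]
    convert hzδ using 2
    ext w
    simp [above, eq_comm, and_assoc]
  have hdisj : Disjoint below above :=
    Set.disjoint_left.2 fun μ hμ ⟨hJμ, hne⟩ => hne (hJμ.antisymm hμ)
  exact Submodule.disjoint_def.1 (Finsupp.disjoint_supported_supported hdisj) _ hbelow habove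

/-- For J a nonempty proper subset of {0,…,d}, if z ∈ A_J and
ρ'(z)(δ_0) lies in span_K{δ_μ : J ⊊ J(μ)}, then ρ'(z)(δ_0) = 0
(i.e. U(𝔫_J⁺) ∩ 𝔟_J^> = U(𝔫_J⁺) ∩ 𝔟). -/
theorem stmt_12 (K : Type) [Field K] [CharZero K] (d : ℕ) (hd : 1 ≤ d)
    (ρ' : UniversalEnvelopingAlgebra K (Matrix (Fin (d+1)) (Fin (d+1)) K) →ₐ[K]
        Module.End K ((Fin (d+1) → ℤ) →₀ K))
    (hρ'₁ : ∀ (i j : Fin (d+1)), i ≠ j → ∀ ν : Fin (d+1) → ℤ,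
      ρ' (ι K (Matrix.single i j (1:K))) (Finsupp.single ν (1:K)) =
        (ν j - 1) • Finsupp.single (ν + Pi.single i 1 - Pi.single j 1) (1:K))
    (hρ'₂ : ∀ (k : Fin (d+1)) (ν : Fin (d+1) → ℤ),
      ρ' (ι K (Matrix.single k k (1:K))) (Finsupp.single ν (1:K)) =
        ν k • Finsupp.single ν (1:K))
    (J : Set (Fin (d+1))) (hJ : J.Nonempty) (hJ' : J ≠ Set.univ)
    (AJ : Subalgebra K (UniversalEnvelopingAlgebra K (Matrix (Fin (d+1)) (Fin (d+1)) K)))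
    (hAJ : AJ = Algebra.adjoin K
      {w | ∃ i ∈ J, ∃ j ∉ J, w = ι K (Matrix.single i j (1:K))})
    (z : UniversalEnvelopingAlgebra K (Matrix (Fin (d+1)) (Fin (d+1)) K))
    (hz : z ∈ AJ)
    (hzδ : ρ' z (Finsupp.single (0 : Fin (d+1) → ℤ) (1:K)) ∈
      Submodule.span K {w : (Fin (d+1) → ℤ) →₀ K | ∃ μ : Fin (d+1) → ℤ,
        J ⊆ {k | 0 < μ k} ∧ J ≠ {k | 0 < μ k} ∧ w = Finsupp.single μ (1:K)}) :
    ρ' z (Finsupp.single (0 : Fin (d+1) → ℤ) (1:K)) = 0 :=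
  stmt_12_general K d ρ' hρ'₁ J AJ hAJ z hz hzδ
end

section
/- Let J be a nonempty proper subset of {0,…,d}. If z ∈ A_J satisfies ρ'(z)(δ_0) = 0 and x ∈ 𝔩(J), then ρ'(z·ι(x))(δ_0) = 0. -/
open UniversalEnvelopingAlgebra

attribute [local instance] LieRing.ofAssociativeRing

/-!
For `b ≠ l` outside `J`, the operators `δ_ν ↦ [ν b = 0] δ_{ν + ε_b}` and `δ_ν ↦ (1 - ν l) δ_{ν - ε_l}`
commute with `ρ'(E_ij)` for every `i ∈ J`: an operator `δ_ν ↦ g (ν k) δ_{ν + s ε_k}` commutes with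
`ρ'(E_ij)` for `i ≠ k` as soon as `g m (m + s - 1) = (m - 1) g (m - 1)`, and both coefficient
functions solve this equation. Hence they commute with `ρ'(A_J)`, and since their composite sends
`δ_0` to `δ_{ε_b - ε_l}`, every `z ∈ A_J` killing `δ_0` also kills `δ_{ε_b - ε_l}`. Finally
`x ∈ 𝔩(J)` is a combination of the `E_ij` with `i, j ∉ J`, and `ρ'(E_ij) δ_0` is a multiple of
`δ_{ε_i - ε_j}` (and vanishes for `i = j`).
-/

section WeightShift

variable {K n : Type*} [Field K] [DecidableEq n]

noncomputable def weightShift (k : n) (s : ℤ) (g : ℤ → K) : Module.End K ((n → ℤ) →₀ K) :=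
  Finsupp.lsum K fun ν => g (ν k) • Finsupp.lsingle (ν + Pi.single k s)

lemma weightShift_single (k : n) (s : ℤ) (g : ℤ → K) (ν : n → ℤ) (c : K) :
    weightShift k s g (Finsupp.single ν c) = g (ν k) • Finsupp.single (ν + Pi.single k s) c := by
  simp [weightShift]

lemma commute_weightShift {E : Module.End K ((n → ℤ) →₀ K)} {i j k : n} {s : ℤ} {g : ℤ → K}
    (hE : ∀ ν : n → ℤ, E (Finsupp.single ν 1) =
      (ν j - 1) • Finsupp.single (ν + Pi.single i 1 - Pi.single j 1) 1)
    (hik : i ≠ k) (hg : ∀ m : ℤ, g m * (m + s - 1) = (m - 1) * g (m - 1)) :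
    Commute E (weightShift k s g) := by
  refine Finsupp.lhom_ext fun ν c => ?_
  have hEc : ∀ μ, E (Finsupp.single μ c) =
      ((μ j - 1 : ℤ) : K) • Finsupp.single (μ + Pi.single i 1 - Pi.single j 1) c := by
    intro μ
    rw [← Finsupp.smul_single_one, map_smul, hE, smul_comm, ← Int.cast_smul_eq_zsmul K,
      Finsupp.smul_single_one]
  simp only [Module.End.mul_apply, weightShift_single, map_smul, hEc, smul_smul]
  have hshift : ν + Pi.single k s + Pi.single i 1 - Pi.single j 1 =
      ν + Pi.single i 1 - Pi.single j 1 + Pi.single k s := by abel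
  rw [hshift]
  congr 1
  rcases eq_or_ne j k with rfl | hjk
  · simp only [Pi.add_apply, Pi.sub_apply, Pi.single_eq_same, Pi.single_eq_of_ne' hik, add_zero,
      Int.cast_add, Int.cast_sub, Int.cast_one]
    linear_combination hg (ν j)
  · simp only [Pi.add_apply, Pi.sub_apply, Pi.single_eq_of_ne hjk, Pi.single_eq_of_ne' hik,
      Pi.single_eq_of_ne' hjk, add_zero, sub_zero]
    ring

lemma commute_weightShift_raise {E : Module.End K ((n → ℤ) →₀ K)} {i j k : n}
    (hE : ∀ ν : n → ℤ, E (Finsupp.single ν 1) =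
      (ν j - 1) • Finsupp.single (ν + Pi.single i 1 - Pi.single j 1) 1)
    (hik : i ≠ k) :
    Commute E (weightShift k 1 fun m => if m = 0 then 1 else 0) := by
  refine commute_weightShift hE hik fun m => ?_
  rcases eq_or_ne m 0 with rfl | hm
  · simp
  rcases eq_or_ne m 1 with rfl | hm1
  · simp
  simp [hm, hm1, sub_eq_zero]

lemma commute_weightShift_lower {E : Module.End K ((n → ℤ) →₀ K)} {i j k : n}
    (hE : ∀ ν : n → ℤ, E (Finsupp.single ν 1) =
      (ν j - 1) • Finsupp.single (ν + Pi.single i 1 - Pi.single j 1) 1)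
    (hik : i ≠ k) :
    Commute E (weightShift k (-1) fun m => 1 - m) := by
  refine commute_weightShift hE hik fun m => ?_
  push_cast
  ring

lemma weightShift_lower_raise_single_zero {b l : n} (hbl : b ≠ l) :
    weightShift l (-1) (fun m => (1 : K) - m)
        (weightShift b 1 (fun m => if m = 0 then (1 : K) else 0) (Finsupp.single 0 1)) =
      Finsupp.single (Pi.single b 1 - Pi.single l 1) 1 := by
  simp [weightShift_single, Pi.single_eq_of_ne' hbl, sub_eq_add_neg, Pi.single_neg]

end WeightShift

section Representation

variable {K n : Type*} [Field K] [Fintype n] [DecidableEq n]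
  {ρ' : UniversalEnvelopingAlgebra K (Matrix n n K) →ₐ[K] Module.End K ((n → ℤ) →₀ K)}
  {J : Set n} {z : UniversalEnvelopingAlgebra K (Matrix n n K)}

lemma apply_single_sub_eq_zero_of_mem_adjoin
    (hρ'₁ : ∀ (i j : n), i ≠ j → ∀ ν : n → ℤ,
      ρ' (ι K (Matrix.single i j (1:K))) (Finsupp.single ν (1:K)) =
        (ν j - 1) • Finsupp.single (ν + Pi.single i 1 - Pi.single j 1) (1:K))
    (hz : z ∈ Algebra.adjoin K {w | ∃ i ∈ J, ∃ j ∉ J, w = ι K (Matrix.single i j (1:K))})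
    (hzδ : ρ' z (Finsupp.single 0 1) = 0) {b l : n} (hb : b ∉ J) (hl : l ∉ J) (hbl : b ≠ l) :
    ρ' z (Finsupp.single (Pi.single b 1 - Pi.single l 1) 1) = 0 := by
  have hcomm : ∀ T, (∀ i ∈ J, ∀ j ∉ J, Commute (ρ' (ι K (Matrix.single i j 1))) T) →
      Commute (ρ' z) T := by
    intro T hT
    refine (Algebra.commute_of_mem_adjoin_of_forall_mem_commute (R := K)
      (s := ρ' '' {w | ∃ i ∈ J, ∃ j ∉ J, w = ι K (Matrix.single i j 1)}) ?_ ?_).symm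
    · exact Algebra.adjoin_image K ρ' _ ▸ Subalgebra.mem_map.mpr ⟨z, hz, rfl⟩
    · rintro _ ⟨w, ⟨i, hi, j, hj, rfl⟩, rfl⟩
      exact (hT i hi j hj).symm
  have hne : ∀ i ∈ J, i ≠ b ∧ i ≠ l := fun i hi =>
    ⟨ne_of_mem_of_not_mem hi hb, ne_of_mem_of_not_mem hi hl⟩
  have hR := hcomm _ fun i hi j hj =>
    commute_weightShift_raise (hρ'₁ i j (ne_of_mem_of_not_mem hi hj)) (hne i hi).1
  have hL := hcomm _ fun i hi j hj =>
    commute_weightShift_lower (hρ'₁ i j (ne_of_mem_of_not_mem hi hj)) (hne i hi).2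
  rw [← weightShift_lower_raise_single_zero hbl, ← Module.End.mul_apply,
    ← Module.End.mul_apply, mul_assoc, (hL.mul_right hR).eq, Module.End.mul_apply, hzδ, map_zero]

lemma apply_ι_single_apply_single_zero_eq_zero
    (hρ'₁ : ∀ (i j : n), i ≠ j → ∀ ν : n → ℤ,
      ρ' (ι K (Matrix.single i j (1:K))) (Finsupp.single ν (1:K)) =
        (ν j - 1) • Finsupp.single (ν + Pi.single i 1 - Pi.single j 1) (1:K))
    (hρ'₂ : ∀ (k : n) (ν : n → ℤ),
      ρ' (ι K (Matrix.single k k (1:K))) (Finsupp.single ν (1:K)) =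
        ν k • Finsupp.single ν (1:K))
    (hz : z ∈ Algebra.adjoin K {w | ∃ i ∈ J, ∃ j ∉ J, w = ι K (Matrix.single i j (1:K))})
    (hzδ : ρ' z (Finsupp.single 0 1) = 0) {i j : n} (hi : i ∉ J) (hj : j ∉ J) (c : K) :
    ρ' z (ρ' (ι K (Matrix.single i j c)) (Finsupp.single 0 1)) = 0 := by
  rw [← mul_one c, ← smul_eq_mul, ← Matrix.smul_single, map_smul, map_smul, LinearMap.smul_apply,
    map_smul]
  refine smul_eq_zero_of_right c ?_
  rcases eq_or_ne i j with rfl | hij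
  · rw [hρ'₂, Pi.zero_apply, zero_smul, map_zero]
  · rw [hρ'₁ i j hij, map_zsmul, zero_add,
      apply_single_sub_eq_zero_of_mem_adjoin hρ'₁ hz hzδ hi hj hij, smul_zero]

end Representation

theorem stmt_13_general (K : Type) [Field K] (d : ℕ)
    (ρ' : UniversalEnvelopingAlgebra K (Matrix (Fin (d+1)) (Fin (d+1)) K) →ₐ[K]
        Module.End K ((Fin (d+1) → ℤ) →₀ K))
    (hρ'₁ : ∀ (i j : Fin (d+1)), i ≠ j → ∀ ν : Fin (d+1) → ℤ,
      ρ' (ι K (Matrix.single i j (1:K))) (Finsupp.single ν (1:K)) =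
        (ν j - 1) • Finsupp.single (ν + Pi.single i 1 - Pi.single j 1) (1:K))
    (hρ'₂ : ∀ (k : Fin (d+1)) (ν : Fin (d+1) → ℤ),
      ρ' (ι K (Matrix.single k k (1:K))) (Finsupp.single ν (1:K)) =
        ν k • Finsupp.single ν (1:K))
    (J : Set (Fin (d+1)))
    (AJ : Subalgebra K (UniversalEnvelopingAlgebra K (Matrix (Fin (d+1)) (Fin (d+1)) K)))
    (hAJ : AJ = Algebra.adjoin K
      {w | ∃ i ∈ J, ∃ j ∉ J, w = ι K (Matrix.single i j (1:K))})
    (z : UniversalEnvelopingAlgebra K (Matrix (Fin (d+1)) (Fin (d+1)) K))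
    (hz : z ∈ AJ)
    (hzδ : ρ' z (Finsupp.single (0 : Fin (d+1) → ℤ) (1:K)) = 0)
    (x : Matrix (Fin (d+1)) (Fin (d+1)) K)
    (hx : ∀ i j : Fin (d+1), i ∈ J ∨ j ∈ J → x i j = 0) :
    ρ' (z * ι K x) (Finsupp.single (0 : Fin (d+1) → ℤ) (1:K)) = 0 := by
  subst hAJ
  rw [map_mul, Module.End.mul_apply, Matrix.matrix_eq_sum_single x]
  simp only [map_sum, LinearMap.coe_sum, Finset.sum_apply]
  refine Finset.sum_eq_zero fun i _ => Finset.sum_eq_zero fun j _ => ?_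
  by_cases hij : i ∈ J ∨ j ∈ J
  · simp [hx i j hij]
  · obtain ⟨hi, hj⟩ := not_or.mp hij
    exact apply_ι_single_apply_single_zero_eq_zero hρ'₁ hρ'₂ hz hzδ hi hj _

/-- For J a nonempty proper subset of {0,…,d}, if z ∈ A_J satisfies
ρ'(z)(δ_0) = 0 and x ∈ 𝔩(J), then ρ'(z·ι(x))(δ_0) = 0 ((U(𝔫_J⁺) ∩ 𝔟)·𝔩(J) ⊆ 𝔟). -/
theorem stmt_13 (K : Type) [Field K] [CharZero K] (d : ℕ) (hd : 1 ≤ d)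
    (ρ' : UniversalEnvelopingAlgebra K (Matrix (Fin (d+1)) (Fin (d+1)) K) →ₐ[K]
        Module.End K ((Fin (d+1) → ℤ) →₀ K))
    (hρ'₁ : ∀ (i j : Fin (d+1)), i ≠ j → ∀ ν : Fin (d+1) → ℤ,
      ρ' (ι K (Matrix.single i j (1:K))) (Finsupp.single ν (1:K)) =
        (ν j - 1) • Finsupp.single (ν + Pi.single i 1 - Pi.single j 1) (1:K))
    (hρ'₂ : ∀ (k : Fin (d+1)) (ν : Fin (d+1) → ℤ),
      ρ' (ι K (Matrix.single k k (1:K))) (Finsupp.single ν (1:K)) =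
        ν k • Finsupp.single ν (1:K))
    (J : Set (Fin (d+1))) (hJ : J.Nonempty) (hJ' : J ≠ Set.univ)
    (AJ : Subalgebra K (UniversalEnvelopingAlgebra K (Matrix (Fin (d+1)) (Fin (d+1)) K)))
    (hAJ : AJ = Algebra.adjoin K
      {w | ∃ i ∈ J, ∃ j ∉ J, w = ι K (Matrix.single i j (1:K))})
    (z : UniversalEnvelopingAlgebra K (Matrix (Fin (d+1)) (Fin (d+1)) K))
    (hz : z ∈ AJ)
    (hzδ : ρ' z (Finsupp.single (0 : Fin (d+1) → ℤ) (1:K)) = 0)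
    (x : Matrix (Fin (d+1)) (Fin (d+1)) K)
    (hx : ∀ i j : Fin (d+1), i ∈ J ∨ j ∈ J → x i j = 0) :
    ρ' (z * ι K x) (Finsupp.single (0 : Fin (d+1) → ℤ) (1:K)) = 0 :=
  stmt_13_general K d ρ' hρ'₁ hρ'₂ J AJ hAJ z hz hzδ x hx
end

section
/- Let J be a nonempty proper subset of {0,…,d}. For every z ∈ A_J and x ∈ 𝔩(J), the element ι(x)z − zι(x) again lies in A_J; and if moreover ρ'(z)(δ_0) = 0, then ρ'(ι(x)z − zι(x))(δ_0) = 0. -/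
/-!
For `z ∈ A_J` the operator `ρ'(z)` is a "signed shift": `ρ'(z) δ_ν = ∑_μ s(μ) c(μ, ν) δ_{ν+μ}`,
where every shift `μ` is `≥ 0` on `J` and `≤ 0` off `J`, and `c(μ, ν)` is a product of falling
factorials in the `ν b - 1`. Such operators form a subalgebra because `c` is a cocycle on shifts of
the same sign. Since `c(μ, 0) ≠ 0` in characteristic zero, `ρ'(z) δ_0 = ∑_μ s(μ) c(μ, 0) δ_μ`
determines `s`, so `ρ'(z) δ_0 = 0` forces `ρ'(z) = 0`, and the second claim follows.
The first claim holds because `ad (ι x)` is a derivation and `⁅x, E_ab⁆ = -∑_j x_bj E_aj`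
involves only `j ∉ J`.
-/

open Polynomial UniversalEnvelopingAlgebra

attribute [local instance 100] LieRing.ofAssociativeRing

section Weights

variable {ι : Type*}

def signCone (J : Set ι) : AddSubmonoid (ι → ℤ) where
  carrier := {μ | ∀ j, (j ∈ J → 0 ≤ μ j) ∧ (j ∉ J → μ j ≤ 0)}
  add_mem' hμ hμ' j :=
    ⟨fun hj => add_nonneg ((hμ j).1 hj) ((hμ' j).1 hj),
      fun hj => add_nonpos ((hμ j).2 hj) ((hμ' j).2 hj)⟩
  zero_mem' _ := ⟨fun _ => le_rfl, fun _ => le_rfl⟩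

lemma single_sub_single_mem_signCone [DecidableEq ι] {J : Set ι} {a b : ι}
    (ha : a ∈ J) (hb : b ∉ J) : Pi.single a 1 - Pi.single b 1 ∈ signCone J := by
  intro j
  by_cases hja : j = a <;> by_cases hjb : j = b <;> subst_vars <;>
    simp_all

variable [Fintype ι]

/-- Applying `r` generators `E_ab` with `b ∉ J` to `δ_ν` lowers `ν b` by `r` and multiplies by
`(ν b - 1) (ν b - 2) ⋯ (ν b - r)`; this is the product of those factors over all coordinates. -/
noncomputable def shiftCoeff (μ ν : ι → ℤ) : ℤ :=
  ∏ j, (descPochhammer ℤ (-μ j).toNat).eval (ν j - 1)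

@[simp]
lemma shiftCoeff_zero_left (ν : ι → ℤ) : shiftCoeff 0 ν = 1 := by
  simp [shiftCoeff]

lemma shiftCoeff_zero_right_ne_zero (μ : ι → ℤ) : shiftCoeff μ 0 ≠ 0 := by
  simp only [shiftCoeff, Finset.prod_ne_zero_iff, descPochhammer_eval_eq_prod_range]
  intro j _ k _
  simp only [Pi.zero_apply]
  omega

lemma shiftCoeff_add {J : Set ι} {μ μ' : ι → ℤ} (hμ : μ ∈ signCone J) (hμ' : μ' ∈ signCone J)
    (ν : ι → ℤ) : shiftCoeff (μ + μ') ν = shiftCoeff μ ν * shiftCoeff μ' (ν + μ) := by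
  rw [shiftCoeff, shiftCoeff, shiftCoeff, ← Finset.prod_mul_distrib]
  refine Finset.prod_congr rfl fun j _ => ?_
  by_cases hj : j ∈ J
  · have h₁ := (hμ j).1 hj
    have h₂ := (hμ' j).1 hj
    rw [show (-μ j).toNat = 0 by omega, show (-μ' j).toNat = 0 by omega,
      show (-(μ + μ') j).toNat = 0 by simp only [Pi.add_apply]; omega]
    simp
  · obtain ⟨r, hr⟩ : ∃ r : ℕ, μ j = -r := ⟨(-μ j).toNat, by have := (hμ j).2 hj; omega⟩
    obtain ⟨r', hr'⟩ : ∃ r' : ℕ, μ' j = -r' := ⟨(-μ' j).toNat, by have := (hμ' j).2 hj; omega⟩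
    have hsum : (-(μ + μ') j).toNat = r + r' := by simp only [Pi.add_apply, hr, hr']; omega
    have hshift : (ν + μ) j - 1 = ν j - 1 - r := by rw [Pi.add_apply, hr]; ring
    rw [hsum, ← descPochhammer_mul, eval_mul, eval_comp, hshift, hr, hr']
    simp

lemma shiftCoeff_single_sub_single [DecidableEq ι] {a b : ι} (hab : a ≠ b) (ν : ι → ℤ) :
    shiftCoeff (Pi.single a 1 - Pi.single b 1) ν = ν b - 1 := by
  rw [shiftCoeff, Finset.prod_eq_single b]
  · simp [hab.symm]
  · intro j _ hjb
    by_cases hja : j = a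
    · subst hja; simp [hab]
    · simp [hja, hjb]
  · simp

end Weights

section ShiftOperators

variable {ι : Type*} [Fintype ι] (K : Type*) [CommRing K]

def IsSignedShift (J : Set ι) (s : (ι → ℤ) →₀ K) (T : Module.End K ((ι → ℤ) →₀ K)) : Prop :=
  (s.support : Set (ι → ℤ)) ⊆ signCone J ∧
    ∀ ν, T (Finsupp.single ν 1) = s.sum fun μ a => Finsupp.single (ν + μ) (a * shiftCoeff μ ν)

variable {K} {J : Set ι}

lemma IsSignedShift.add {s₁ s₂ : (ι → ℤ) →₀ K} {T₁ T₂ : Module.End K ((ι → ℤ) →₀ K)}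
    (h₁ : IsSignedShift K J s₁ T₁) (h₂ : IsSignedShift K J s₂ T₂) :
    IsSignedShift K J (s₁ + s₂) (T₁ + T₂) := by
  classical
  refine ⟨fun μ hμ => ?_, fun ν => ?_⟩
  · rcases Finset.mem_union.1 (Finsupp.support_add hμ) with hμ | hμ
    exacts [h₁.1 hμ, h₂.1 hμ]
  · rw [LinearMap.add_apply, h₁.2, h₂.2,
      Finsupp.sum_add_index' (fun _ => by simp) (fun _ _ _ => by simp [add_mul])]

lemma IsSignedShift.mul {s₁ s₂ : (ι → ℤ) →₀ K} {T₁ T₂ : Module.End K ((ι → ℤ) →₀ K)}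
    (h₁ : IsSignedShift K J s₁ T₁) (h₂ : IsSignedShift K J s₂ T₂) :
    IsSignedShift K J
      (s₂.sum fun μ₂ a₂ => s₁.sum fun μ₁ a₁ => Finsupp.single (μ₂ + μ₁) (a₂ * a₁)) (T₁ * T₂) := by
  classical
  refine ⟨fun μ hμ => ?_, fun ν => ?_⟩
  · obtain ⟨μ₂, hμ₂, hμ⟩ := Finset.mem_biUnion.1 (Finsupp.support_sum hμ)
    obtain ⟨μ₁, hμ₁, hμ⟩ := Finset.mem_biUnion.1 (Finsupp.support_sum hμ)
    rw [Finset.mem_singleton.1 (Finsupp.support_single_subset hμ)]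
    exact add_mem (h₂.1 hμ₂) (h₁.1 hμ₁)
  · rw [Module.End.mul_apply, h₂.2, map_finsuppSum,
      Finsupp.sum_sum_index (fun _ => by simp) (fun _ _ _ => by simp [add_mul])]
    refine Finsupp.sum_congr fun μ₂ hμ₂ => ?_
    rw [← mul_one (_ * _), ← smul_eq_mul, ← Finsupp.smul_single, map_smul, h₁.2,
      Finsupp.sum_sum_index (fun _ => by simp) (fun _ _ _ => by simp [add_mul]),
      Finsupp.smul_sum]
    refine Finsupp.sum_congr fun μ₁ hμ₁ => ?_
    rw [Finsupp.sum_single_index (by simp), Finsupp.smul_single, smul_eq_mul, ← add_assoc,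
      shiftCoeff_add (h₂.1 hμ₂) (h₁.1 hμ₁)]
    push_cast
    congr 1
    ring

lemma isSignedShift_algebraMap (r : K) :
    IsSignedShift K J (Finsupp.single 0 r) (algebraMap K (Module.End K ((ι → ℤ) →₀ K)) r) := by
  refine ⟨fun μ hμ => ?_, fun ν => ?_⟩
  · rw [Finset.mem_singleton.1 (Finsupp.support_single_subset hμ)]
    exact zero_mem _
  · rw [Module.algebraMap_end_apply, Finsupp.sum_single_index (by simp), shiftCoeff_zero_left,
      add_zero, Int.cast_one, mul_one, Finsupp.smul_single, smul_eq_mul, mul_one]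

variable (K J) in
def signedShiftOps : Subalgebra K (Module.End K ((ι → ℤ) →₀ K)) where
  carrier := {T | ∃ s, IsSignedShift K J s T}
  mul_mem' := fun ⟨_, h₁⟩ ⟨_, h₂⟩ => ⟨_, h₁.mul h₂⟩
  add_mem' := fun ⟨_, h₁⟩ ⟨_, h₂⟩ => ⟨_, h₁.add h₂⟩
  algebraMap_mem' r := ⟨_, isSignedShift_algebraMap r⟩

lemma mem_signedShiftOps_of_apply_single [DecidableEq ι] {a b : ι} (ha : a ∈ J) (hb : b ∉ J)
    {T : Module.End K ((ι → ℤ) →₀ K)}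
    (hT : ∀ ν, T (Finsupp.single ν 1) =
      (ν b - 1) • Finsupp.single (ν + Pi.single a 1 - Pi.single b 1) 1) :
    T ∈ signedShiftOps K J := by
  have hab : a ≠ b := fun h => hb (h ▸ ha)
  refine ⟨Finsupp.single (Pi.single a 1 - Pi.single b 1) 1, fun μ hμ => ?_, fun ν => ?_⟩
  · rw [Finset.mem_singleton.1 (Finsupp.support_single_subset hμ)]
    exact single_sub_single_mem_signCone ha hb
  · rw [hT, Finsupp.sum_single_index (by simp), shiftCoeff_single_sub_single hab, add_sub_assoc,
      ← Int.cast_smul_eq_zsmul K, Finsupp.smul_single]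
    simp

variable [NoZeroDivisors K] [CharZero K]

lemma eq_zero_of_mem_signedShiftOps {T : Module.End K ((ι → ℤ) →₀ K)} (hT : T ∈ signedShiftOps K J)
    (h0 : T (Finsupp.single 0 1) = 0) : T = 0 := by
  classical
  obtain ⟨s, -, hs⟩ := hT
  have hs0 : s = 0 := by
    ext μ
    simpa [Finsupp.sum_apply, Finsupp.single_apply, shiftCoeff_zero_right_ne_zero] using
      DFunLike.congr_fun ((hs 0).symm.trans h0) μ
  ext ν : 2
  simp [hs, hs0]

end ShiftOperators

lemma commutator_mem_adjoin {R A : Type*} [CommRing R] [Ring A] [Algebra R A] {s : Set A} (a : A)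
    (hs : ∀ w ∈ s, a * w - w * a ∈ Algebra.adjoin R s) {z : A} (hz : z ∈ Algebra.adjoin R s) :
    a * z - z * a ∈ Algebra.adjoin R s := by
  induction hz using Algebra.adjoin_induction with
  | mem w hw => exact hs w hw
  | algebraMap r => simp [Algebra.commutes]
  | add z₁ z₂ _ _ ih₁ ih₂ =>
    rw [show a * (z₁ + z₂) - (z₁ + z₂) * a = (a * z₁ - z₁ * a) + (a * z₂ - z₂ * a) by noncomm_ring]
    exact add_mem ih₁ ih₂
  | mul z₁ z₂ h₁ h₂ ih₁ ih₂ =>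
    rw [show a * (z₁ * z₂) - z₁ * z₂ * a = (a * z₁ - z₁ * a) * z₂ + z₁ * (a * z₂ - z₂ * a) by
      noncomm_ring]
    exact add_mem (mul_mem ih₁ h₂) (mul_mem h₁ ih₂)

lemma Matrix.lie_single_of_col_eq_zero {n R : Type*} [Fintype n] [DecidableEq n] [CommRing R]
    (x : Matrix n n R) {a : n} (hx : ∀ i, x i a = 0) (b : n) :
    ⁅x, Matrix.single a b (1 : R)⁆ = -∑ j, x b j • Matrix.single a j 1 := by
  rw [Ring.lie_def]
  ext i k
  simp only [Matrix.sub_apply, Matrix.mul_apply, Matrix.single_apply, Matrix.neg_apply,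
    Matrix.sum_apply, Matrix.smul_apply, ite_and]
  simp [hx, Finset.sum_ite_eq]

lemma ι_commutator_single_mem_adjoin {K n : Type*} [CommRing K] [Fintype n] [DecidableEq n]
    {J : Set n} {x : Matrix n n K} (hx : ∀ i j, i ∈ J ∨ j ∈ J → x i j = 0) {a b : n}
    (ha : a ∈ J) :
    ι K x * ι K (Matrix.single a b 1) - ι K (Matrix.single a b 1) * ι K x ∈
      Algebra.adjoin K {w | ∃ i ∈ J, ∃ j ∉ J, w = ι K (Matrix.single i j (1 : K))} := by
  rw [← Ring.lie_def, ← LieHom.map_lie,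
    Matrix.lie_single_of_col_eq_zero x (fun i => hx i a (Or.inr ha)), map_neg, map_sum]
  refine neg_mem (sum_mem fun j _ => ?_)
  by_cases hj : j ∈ J
  · simp [hx b j (Or.inr hj)]
  · rw [map_smul]
    refine Subalgebra.smul_mem _ (Algebra.subset_adjoin ?_) _
    exact ⟨a, ha, j, hj, rfl⟩

theorem stmt_14_general (K : Type) [Field K] [CharZero K] (d : ℕ)
    (ρ' : UniversalEnvelopingAlgebra K (Matrix (Fin (d+1)) (Fin (d+1)) K) →ₐ[K]
        Module.End K ((Fin (d+1) → ℤ) →₀ K))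
    (hρ'₁ : ∀ (i j : Fin (d+1)), i ≠ j → ∀ ν : Fin (d+1) → ℤ,
      ρ' (ι K (Matrix.single i j (1:K))) (Finsupp.single ν (1:K)) =
        (ν j - 1) • Finsupp.single (ν + Pi.single i 1 - Pi.single j 1) (1:K))
    (J : Set (Fin (d+1)))
    (AJ : Subalgebra K (UniversalEnvelopingAlgebra K (Matrix (Fin (d+1)) (Fin (d+1)) K)))
    (hAJ : AJ = Algebra.adjoin K
      {w | ∃ i ∈ J, ∃ j ∉ J, w = ι K (Matrix.single i j (1:K))})
    (z : UniversalEnvelopingAlgebra K (Matrix (Fin (d+1)) (Fin (d+1)) K))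
    (hz : z ∈ AJ)
    (x : Matrix (Fin (d+1)) (Fin (d+1)) K)
    (hx : ∀ i j : Fin (d+1), i ∈ J ∨ j ∈ J → x i j = 0) :
    (ι K x * z - z * ι K x) ∈ AJ ∧
    (ρ' z (Finsupp.single (0 : Fin (d+1) → ℤ) (1:K)) = 0 →
      ρ' (ι K x * z - z * ι K x) (Finsupp.single (0 : Fin (d+1) → ℤ) (1:K)) = 0) := by
  subst hAJ
  refine ⟨commutator_mem_adjoin _ ?_ hz, fun h0 => ?_⟩
  · rintro _ ⟨a, ha, b, -, rfl⟩
    exact ι_commutator_single_mem_adjoin hx ha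
  · have hA : Algebra.adjoin K {w | ∃ i ∈ J, ∃ j ∉ J, w = ι K (Matrix.single i j (1 : K))} ≤
        (signedShiftOps K J).comap ρ' := by
      refine Algebra.adjoin_le ?_
      rintro _ ⟨a, ha, b, hb, rfl⟩
      exact mem_signedShiftOps_of_apply_single ha hb (hρ'₁ a b fun h => hb (h ▸ ha))
    have hρz : ρ' z = 0 := eq_zero_of_mem_signedShiftOps (hA hz) h0
    simp [hρz]

/-- For J a nonempty proper subset of {0,…,d}, z ∈ A_J and x ∈ 𝔩(J),
the commutator ι(x)z − zι(x) again lies in A_J; and if ρ'(z)(δ_0) = 0 then also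
ρ'(ι(x)z − zι(x))(δ_0) = 0 (U(𝔫_J⁺) ∩ 𝔟 is ad(𝔩(J))-invariant). -/
theorem stmt_14 (K : Type) [Field K] [CharZero K] (d : ℕ) (hd : 1 ≤ d)
    (ρ' : UniversalEnvelopingAlgebra K (Matrix (Fin (d+1)) (Fin (d+1)) K) →ₐ[K]
        Module.End K ((Fin (d+1) → ℤ) →₀ K))
    (hρ'₁ : ∀ (i j : Fin (d+1)), i ≠ j → ∀ ν : Fin (d+1) → ℤ,
      ρ' (ι K (Matrix.single i j (1:K))) (Finsupp.single ν (1:K)) =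
        (ν j - 1) • Finsupp.single (ν + Pi.single i 1 - Pi.single j 1) (1:K))
    (hρ'₂ : ∀ (k : Fin (d+1)) (ν : Fin (d+1) → ℤ),
      ρ' (ι K (Matrix.single k k (1:K))) (Finsupp.single ν (1:K)) =
        ν k • Finsupp.single ν (1:K))
    (J : Set (Fin (d+1))) (hJ : J.Nonempty) (hJ' : J ≠ Set.univ)
    (AJ : Subalgebra K (UniversalEnvelopingAlgebra K (Matrix (Fin (d+1)) (Fin (d+1)) K)))
    (hAJ : AJ = Algebra.adjoin K
      {w | ∃ i ∈ J, ∃ j ∉ J, w = ι K (Matrix.single i j (1:K))})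
    (z : UniversalEnvelopingAlgebra K (Matrix (Fin (d+1)) (Fin (d+1)) K))
    (hz : z ∈ AJ)
    (x : Matrix (Fin (d+1)) (Fin (d+1)) K)
    (hx : ∀ i j : Fin (d+1), i ∈ J ∨ j ∈ J → x i j = 0) :
    (ι K x * z - z * ι K x) ∈ AJ ∧
    (ρ' z (Finsupp.single (0 : Fin (d+1) → ℤ) (1:K)) = 0 →
      ρ' (ι K x * z - z * ι K x) (Finsupp.single (0 : Fin (d+1) → ℤ) (1:K)) = 0) :=
  stmt_14_general K d ρ' hρ'₁ J AJ hAJ z hz x hx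
end

section
/- Let J be a nonempty proper subset of {0,…,d}. For every z ∈ M_J° and every x ∈ 𝔩(J), the vector ρ'(z·ι(x))(δ_0) lies in span_K{δ_μ : J ⊆ J(μ) and J ≠ J(μ)}. -/
open UniversalEnvelopingAlgebra

attribute [local instance 100] LieRing.ofAssociativeRing

/-!
Write `x ∈ 𝔩(J)` as a combination of the `E_pq` with `p, q ∉ J`; the diagonal ones kill `δ_0`.
For `p ≠ q`, `ρ(E_pq)` agrees on `δ_0` with `T = ρ(E_pq) ∘ π`, where `π` projects onto the span of
the `δ_μ` with `μ(p) = 0`. Both are weighted shifts of the basis `(δ_μ)`, and comparing weights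
shows that `T` commutes with every `ρ(E_ij)`, `i ∈ J`, `j ∉ J`, hence with `ρ'(A_J)`. Thus
`ρ'(z E_pq) δ_0 = T ρ'(z) δ_0`, and `T` sends each `δ_μ` with `J ⊆ J(μ)` to a multiple of
`δ_{μ + ε_p - ε_q}`, which is still positive on `J` and moreover positive at `p ∉ J`
(or to `0`, when `μ(p) ≠ 0`).
-/

section WeightedShift

variable {R : Type*} [CommRing R] {G : Type*} [AddCommMonoid G]

noncomputable def weightedShift (a : G → ℤ) (s : G) : Module.End R (G →₀ R) :=
  Finsupp.lsum R fun μ => a μ • Finsupp.lsingle (μ + s)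

@[simp]
lemma weightedShift_single (a : G → ℤ) (s μ : G) (c : R) :
    weightedShift a s (Finsupp.single μ c) = a μ • Finsupp.single (μ + s) c := by
  simp [weightedShift]

lemma commute_weightedShift {a b : G → ℤ} {s t : G}
    (h : ∀ μ, b μ * a (μ + t) = a μ * b (μ + s)) :
    Commute (weightedShift (R := R) a s) (weightedShift b t) := by
  ext μ
  simp only [LinearMap.coe_comp, Function.comp_apply, Finsupp.lsingle_apply,
    Module.End.mul_apply, weightedShift_single, map_zsmul, smul_smul, h, add_right_comm μ s t]

lemma weightedShift_mem_of_mem_span {a : G → ℤ} {s : G} {P : G → Prop}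
    {N : Submodule R (G →₀ R)} (h : ∀ μ, P μ → a μ ≠ 0 → Finsupp.single (μ + s) 1 ∈ N)
    {v : G →₀ R} (hv : v ∈ Submodule.span R {w | ∃ μ, P μ ∧ w = Finsupp.single μ 1}) :
    weightedShift a s v ∈ N := by
  suffices Submodule.span R {w | ∃ μ, P μ ∧ w = Finsupp.single μ 1} ≤ N.comap (weightedShift a s)
    from this hv
  rw [Submodule.span_le]
  rintro _ ⟨μ, hμ, rfl⟩
  rw [SetLike.mem_coe, Submodule.mem_comap, weightedShift_single]
  by_cases ha : a μ = 0
  · simp [ha]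
  · exact N.smul_of_tower_mem _ (h μ hμ ha)

end WeightedShift

lemma AlgHom.commute_of_mem_adjoin {R A B : Type*} [CommSemiring R] [Semiring A] [Algebra R A]
    [Semiring B] [Algebra R B] (f : A →ₐ[R] B) {s : Set A} {T : B}
    (hs : ∀ g ∈ s, Commute (f g) T) {z : A} (hz : z ∈ Algebra.adjoin R s) :
    Commute (f z) T := by
  have : Algebra.adjoin R s ≤ (Subalgebra.centralizer R {T}).comap f :=
    Algebra.adjoin_le fun g hg =>
      (Subalgebra.mem_centralizer_iff R).2 fun _ hT => hT ▸ (hs g hg).symm.eq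
  exact ((Subalgebra.mem_centralizer_iff R).1 (this hz) T rfl).symm

lemma UniversalEnvelopingAlgebra.ι_eq_sum_single {K n : Type*} [CommRing K] [Fintype n]
    [DecidableEq n] (x : Matrix n n K) :
    ι K x = ∑ p, ∑ q, x p q • ι K (Matrix.single p q (1 : K)) := by
  conv_lhs => rw [Matrix.matrix_eq_sum_single x]
  simp [map_sum, ← map_smul]

section CutoffRaising

variable {K : Type*} [CommRing K] {n : Type*} [DecidableEq n]

noncomputable def cutoffRaising (k l : n) : Module.End K ((n → ℤ) →₀ K) :=
  weightedShift (fun ν => if ν k = 0 then ν l - 1 else 0) (Pi.single k 1 - Pi.single l 1)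

lemma cutoffRaising_mem_span {J : Set n} {k l : n} (hk : k ∉ J) (hl : l ∉ J) (hkl : k ≠ l)
    {v : (n → ℤ) →₀ K}
    (hv : v ∈ Submodule.span K {w | ∃ μ : n → ℤ, J ⊆ {m | 0 < μ m} ∧ w = Finsupp.single μ 1}) :
    cutoffRaising k l v ∈ Submodule.span K {w | ∃ μ : n → ℤ,
      J ⊆ {m | 0 < μ m} ∧ J ≠ {m | 0 < μ m} ∧ w = Finsupp.single μ (1:K)} := by
  refine weightedShift_mem_of_mem_span (fun μ hμ hμk => ?_) hv
  refine Submodule.subset_span ⟨_, ?_, ?_, rfl⟩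
  · intro m hm
    have hmk : m ≠ k := ne_of_mem_of_not_mem hm hk
    have hml : m ≠ l := ne_of_mem_of_not_mem hm hl
    simpa [Pi.single_apply, hmk, hml] using hμ hm
  · have hμk : μ k = 0 := by by_contra h; simp [h] at hμk
    intro hJ
    refine hk (hJ ▸ ?_)
    simp [Pi.single_apply, hμk, hkl]

end CutoffRaising

section GlRepresentation

variable {K : Type*} [CommRing K] {n : Type*} [Fintype n] [DecidableEq n]
  (ρ' : UniversalEnvelopingAlgebra K (Matrix n n K) →ₐ[K] Module.End K ((n → ℤ) →₀ K))

lemma map_ι_single_eq_weightedShift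
    (hρ' : ∀ i j : n, i ≠ j → ∀ ν : n → ℤ,
      ρ' (ι K (Matrix.single i j (1:K))) (Finsupp.single ν (1:K)) =
        (ν j - 1) • Finsupp.single (ν + Pi.single i 1 - Pi.single j 1) (1:K))
    {i j : n} (hij : i ≠ j) :
    ρ' (ι K (Matrix.single i j 1)) =
      weightedShift (fun ν => ν j - 1) (Pi.single i 1 - Pi.single j 1) := by
  refine Finsupp.lhom_ext' fun ν => LinearMap.ext_ring ?_
  simp only [LinearMap.comp_apply, Finsupp.lsingle_apply, hρ' i j hij, weightedShift_single,
    add_sub_assoc]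

lemma commute_map_ι_single_cutoffRaising
    (hρ' : ∀ i j : n, i ≠ j → ∀ ν : n → ℤ,
      ρ' (ι K (Matrix.single i j (1:K))) (Finsupp.single ν (1:K)) =
        (ν j - 1) • Finsupp.single (ν + Pi.single i 1 - Pi.single j 1) (1:K))
    {i j k l : n} (hij : i ≠ j) (hik : i ≠ k) (hil : i ≠ l) (hkl : k ≠ l) :
    Commute (ρ' (ι K (Matrix.single i j 1))) (cutoffRaising k l) := by
  rw [map_ι_single_eq_weightedShift ρ' hρ' hij]
  refine commute_weightedShift fun μ => ?_
  simp only [Pi.add_apply, Pi.sub_apply, Pi.single_apply]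
  grind

lemma map_mul_ι_single_apply_zero_mem
    (hρ'₁ : ∀ i j : n, i ≠ j → ∀ ν : n → ℤ,
      ρ' (ι K (Matrix.single i j (1:K))) (Finsupp.single ν (1:K)) =
        (ν j - 1) • Finsupp.single (ν + Pi.single i 1 - Pi.single j 1) (1:K))
    (hρ'₂ : ∀ (k : n) (ν : n → ℤ),
      ρ' (ι K (Matrix.single k k (1:K))) (Finsupp.single ν (1:K)) = ν k • Finsupp.single ν (1:K))
    {J : Set n} {z : UniversalEnvelopingAlgebra K (Matrix n n K)}
    (hz : z ∈ Algebra.adjoin K {w | ∃ i ∈ J, ∃ j ∉ J, w = ι K (Matrix.single i j (1:K))})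
    (hzδ : ρ' z (Finsupp.single 0 1) ∈
      Submodule.span K {w | ∃ μ : n → ℤ, J ⊆ {m | 0 < μ m} ∧ w = Finsupp.single μ 1})
    {p q : n} (hp : p ∉ J) (hq : q ∉ J) :
    ρ' (z * ι K (Matrix.single p q 1)) (Finsupp.single 0 1) ∈ Submodule.span K {w | ∃ μ : n → ℤ,
      J ⊆ {m | 0 < μ m} ∧ J ≠ {m | 0 < μ m} ∧ w = Finsupp.single μ (1:K)} := by
  rw [map_mul, Module.End.mul_apply]
  rcases eq_or_ne p q with rfl | hpq
  · rw [hρ'₂, Pi.zero_apply, zero_smul, map_zero]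
    exact zero_mem _
  have hδ : ρ' (ι K (Matrix.single p q 1)) (Finsupp.single 0 1) =
      cutoffRaising p q (Finsupp.single 0 1) := by
    rw [map_ι_single_eq_weightedShift ρ' hρ'₁ hpq, cutoffRaising, weightedShift_single,
      weightedShift_single, if_pos (Pi.zero_apply p)]
  have hcomm : Commute (ρ' z) (cutoffRaising p q) := by
    refine ρ'.commute_of_mem_adjoin ?_ hz
    rintro _ ⟨i, hi, j, hj, rfl⟩
    exact commute_map_ι_single_cutoffRaising ρ' hρ'₁ (ne_of_mem_of_not_mem hi hj)
      (ne_of_mem_of_not_mem hi hp) (ne_of_mem_of_not_mem hi hq) hpq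
  rw [hδ, ← Module.End.mul_apply, hcomm.eq, Module.End.mul_apply]
  exact cutoffRaising_mem_span hp hq hpq hzδ

end GlRepresentation

theorem stmt_15_general (K : Type) [Field K] (d : ℕ)
    (ρ' : UniversalEnvelopingAlgebra K (Matrix (Fin (d+1)) (Fin (d+1)) K) →ₐ[K]
        Module.End K ((Fin (d+1) → ℤ) →₀ K))
    (hρ'₁ : ∀ (i j : Fin (d+1)), i ≠ j → ∀ ν : Fin (d+1) → ℤ,
      ρ' (ι K (Matrix.single i j (1:K))) (Finsupp.single ν (1:K)) =
        (ν j - 1) • Finsupp.single (ν + Pi.single i 1 - Pi.single j 1) (1:K))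
    (hρ'₂ : ∀ (k : Fin (d+1)) (ν : Fin (d+1) → ℤ),
      ρ' (ι K (Matrix.single k k (1:K))) (Finsupp.single ν (1:K)) =
        ν k • Finsupp.single ν (1:K))
    (J : Set (Fin (d+1)))
    (AJ : Subalgebra K (UniversalEnvelopingAlgebra K (Matrix (Fin (d+1)) (Fin (d+1)) K)))
    (hAJ : AJ = Algebra.adjoin K
      {w | ∃ i ∈ J, ∃ j ∉ J, w = ι K (Matrix.single i j (1:K))})
    (z : UniversalEnvelopingAlgebra K (Matrix (Fin (d+1)) (Fin (d+1)) K))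
    -- z ∈ M_J°
    (hz : z ∈ AJ)
    (hzδ : ρ' z (Finsupp.single (0 : Fin (d+1) → ℤ) (1:K)) ∈
      Submodule.span K {w : (Fin (d+1) → ℤ) →₀ K | ∃ μ : Fin (d+1) → ℤ,
        (∑ k, μ k) = 0 ∧ (∀ k ∈ J, μ k = 1) ∧ (∀ k ∉ J, μ k ≤ 0) ∧
        w = Finsupp.single μ (1:K)} ⊔
      Submodule.span K {w : (Fin (d+1) → ℤ) →₀ K | ∃ μ : Fin (d+1) → ℤ,
        J ⊆ {k | 0 < μ k} ∧ J ≠ {k | 0 < μ k} ∧ w = Finsupp.single μ (1:K)})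
    (x : Matrix (Fin (d+1)) (Fin (d+1)) K)
    (hx : ∀ i j : Fin (d+1), i ∈ J ∨ j ∈ J → x i j = 0) :
    ρ' (z * ι K x) (Finsupp.single (0 : Fin (d+1) → ℤ) (1:K)) ∈
      Submodule.span K {w : (Fin (d+1) → ℤ) →₀ K | ∃ μ : Fin (d+1) → ℤ,
        J ⊆ {k | 0 < μ k} ∧ J ≠ {k | 0 < μ k} ∧ w = Finsupp.single μ (1:K)} := by
  subst hAJ
  have hzδ' : ρ' z (Finsupp.single 0 1) ∈ Submodule.span K
      {w | ∃ μ : Fin (d+1) → ℤ, J ⊆ {m | 0 < μ m} ∧ w = Finsupp.single μ 1} := by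
    refine (show _ ≤ Submodule.span K _ from
      sup_le (Submodule.span_mono ?_) (Submodule.span_mono ?_)) hzδ
    · rintro _ ⟨μ, -, hJ, -, rfl⟩
      exact ⟨μ, fun k hk => by simp [hJ k hk], rfl⟩
    · rintro _ ⟨μ, hJ, -, rfl⟩
      exact ⟨μ, hJ, rfl⟩
  rw [ι_eq_sum_single x]
  simp only [Finset.mul_sum, mul_smul_comm, map_sum, map_smul, LinearMap.sum_apply,
    LinearMap.smul_apply]
  refine Submodule.sum_mem _ fun p _ => Submodule.sum_mem _ fun q _ => ?_
  by_cases hpq : p ∈ J ∨ q ∈ J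
  · simp [hx p q hpq]
  push Not at hpq
  exact Submodule.smul_mem _ _
    (map_mul_ι_single_apply_zero_mem ρ' hρ'₁ hρ'₂ hz hzδ' hpq.1 hpq.2)

/-- For J a nonempty proper subset of {0,…,d}, z ∈ M_J° and x ∈ 𝔩(J),
the vector ρ'(z·ι(x))(δ_0) lies in span_K{δ_μ : J ⊊ J(μ)} (M_J°·𝔩(J) ⊆ 𝔟_J^>). -/
theorem stmt_15 (K : Type) [Field K] [CharZero K] (d : ℕ) (hd : 1 ≤ d)
    (ρ' : UniversalEnvelopingAlgebra K (Matrix (Fin (d+1)) (Fin (d+1)) K) →ₐ[K]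
        Module.End K ((Fin (d+1) → ℤ) →₀ K))
    (hρ'₁ : ∀ (i j : Fin (d+1)), i ≠ j → ∀ ν : Fin (d+1) → ℤ,
      ρ' (ι K (Matrix.single i j (1:K))) (Finsupp.single ν (1:K)) =
        (ν j - 1) • Finsupp.single (ν + Pi.single i 1 - Pi.single j 1) (1:K))
    (hρ'₂ : ∀ (k : Fin (d+1)) (ν : Fin (d+1) → ℤ),
      ρ' (ι K (Matrix.single k k (1:K))) (Finsupp.single ν (1:K)) =
        ν k • Finsupp.single ν (1:K))
    (J : Set (Fin (d+1))) (hJ : J.Nonempty) (hJ' : J ≠ Set.univ)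
    (AJ : Subalgebra K (UniversalEnvelopingAlgebra K (Matrix (Fin (d+1)) (Fin (d+1)) K)))
    (hAJ : AJ = Algebra.adjoin K
      {w | ∃ i ∈ J, ∃ j ∉ J, w = ι K (Matrix.single i j (1:K))})
    (z : UniversalEnvelopingAlgebra K (Matrix (Fin (d+1)) (Fin (d+1)) K))
    -- z ∈ M_J°
    (hz : z ∈ AJ)
    (hzδ : ρ' z (Finsupp.single (0 : Fin (d+1) → ℤ) (1:K)) ∈
      Submodule.span K {w : (Fin (d+1) → ℤ) →₀ K | ∃ μ : Fin (d+1) → ℤ,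
        (∑ k, μ k) = 0 ∧ (∀ k ∈ J, μ k = 1) ∧ (∀ k ∉ J, μ k ≤ 0) ∧
        w = Finsupp.single μ (1:K)} ⊔
      Submodule.span K {w : (Fin (d+1) → ℤ) →₀ K | ∃ μ : Fin (d+1) → ℤ,
        J ⊆ {k | 0 < μ k} ∧ J ≠ {k | 0 < μ k} ∧ w = Finsupp.single μ (1:K)})
    (x : Matrix (Fin (d+1)) (Fin (d+1)) K)
    (hx : ∀ i j : Fin (d+1), i ∈ J ∨ j ∈ J → x i j = 0) :
    ρ' (z * ι K x) (Finsupp.single (0 : Fin (d+1) → ℤ) (1:K)) ∈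
      Submodule.span K {w : (Fin (d+1) → ℤ) →₀ K | ∃ μ : Fin (d+1) → ℤ,
        J ⊆ {k | 0 < μ k} ∧ J ≠ {k | 0 < μ k} ∧ w = Finsupp.single μ (1:K)} :=
  stmt_15_general K d ρ' hρ'₁ hρ'₂ J AJ hAJ z hz hzδ x hx
end

section
/- Let n : {0,…,d} → ℕ be such that n(j) = 0 for at least one j, and define μ : {0,…,d} → ℤ by μ = Σ_{k=0}^d n(k)·α_k, i.e. μ(k) = n((k−1) mod (d+1)) − n(k) for all k. If (m_{ij}) is a family of nonnegative integers indexed by the ordered pairs (i,j) with i ≠ j and i, j ∈ {0,…,d}, such that μ = Σ_{i≠j} m_{ij}(ε_i − ε_j), then Σ_{i<j} m_{ij} ≥ n(d). -/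
/-!
Pick `j₀` with `n j₀ = 0` and cut `{0,…,d}` into `S = {k ≤ j₀}` and `T = {k > j₀}`.
Since `μ(k) = n(k-1) - n(k)` telescopes along `T` (where `k - 1` does not wrap around),
`-∑_{k ∈ T} μ(k) = n(d) - n(j₀) = n(d)`. On the other hand, reading `m` as a flow with net
outflow `μ`, the net inflow `-∑_{k ∈ T} μ(k)` into `T` is at most the flow along the edges
from `S` to `T`, and every such edge `i → j` has `i ≤ j₀ < j`.
-/

open Finset

lemma Fin.sum_Ioi_sub_sub_one {G : Type*} [AddCommGroup G] {d : ℕ} (f : Fin (d + 1) → G)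
    (a : Fin (d + 1)) : ∑ k ∈ Ioi a, (f k - f (k - 1)) = f (Fin.last d) - f a := by
  induction a using Fin.reverseInduction with
  | last => simp [Ioi_eq_empty.mpr fun k _ => Fin.le_last k]
  | cast b ih =>
    have hIoi : Ioi b.castSucc = insert b.succ (Ioi b.succ) := by
      rw [Ioi_insert]; ext k; simp [Fin.castSucc_lt_iff_succ_le]
    have hpred : b.succ - 1 = b.castSucc := sub_eq_of_eq_add Fin.coeSucc_eq_succ.symm
    rw [hIoi, sum_insert (by simp), ih, hpred]
    abel

section Flow

variable {ι G : Type*} [Fintype ι] [DecidableEq ι] [AddCommGroup G]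

def netFlow (w : ι → ι → G) (k : ι) : G := ∑ j, w k j - ∑ i, w i k

lemma netFlow_eq_sum_ne_sub_sum_ne (w : ι → ι → G) (k : ι) :
    netFlow w k = ∑ j ∈ univ.filter (fun j => j ≠ k), w k j -
      ∑ i ∈ univ.filter (fun i => i ≠ k), w i k := by
  rw [netFlow, filter_ne', ← add_sum_erase _ _ (mem_univ k), ← add_sum_erase _ _ (mem_univ k)]
  abel

lemma sum_netFlow_eq (w : ι → ι → G) (s : Finset ι) :
    ∑ k ∈ s, netFlow w k =
      ∑ k ∈ s, ∑ j ∈ sᶜ, w k j - ∑ i ∈ sᶜ, ∑ k ∈ s, w i k := by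
  simp only [netFlow, sum_sub_distrib, ← sum_add_sum_compl s, sum_add_distrib]
  rw [sum_comm (s := s) (t := s),
    sum_comm (s := s) (t := sᶜ) (f := fun k i => w i k)]
  abel

lemma neg_sum_netFlow_le [PartialOrder G] [IsOrderedAddMonoid G] {w : ι → ι → G}
    (hw : 0 ≤ w) (s : Finset ι) :
    -∑ k ∈ s, netFlow w k ≤ ∑ i ∈ sᶜ, ∑ k ∈ s, w i k := by
  have hout : 0 ≤ ∑ k ∈ s, ∑ j ∈ sᶜ, w k j :=
    sum_nonneg fun k _ => sum_nonneg fun j _ => hw k j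
  rw [sum_netFlow_eq, neg_sub]
  exact sub_le_self _ hout

end Flow

lemma sum_compl_Ioi_sum_Ioi_le {ι M : Type*} [Fintype ι] [DecidableEq ι] [LinearOrder ι]
    [LocallyFiniteOrderTop ι] [AddCommMonoid M] [PartialOrder M] [IsOrderedAddMonoid M]
    {w : ι → ι → M} (hw : 0 ≤ w) (a : ι) :
    ∑ i ∈ (Ioi a)ᶜ, ∑ k ∈ Ioi a, w i k ≤ ∑ i, ∑ j ∈ Ioi i, w i j := by
  have hinner : ∀ i ∈ (Ioi a)ᶜ, ∑ k ∈ Ioi a, w i k ≤ ∑ j ∈ Ioi i, w i j := by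
    intro i hi
    have hia : i ≤ a := by simpa using hi
    exact sum_le_sum_of_subset_of_nonneg (Ioi_subset_Ioi hia) fun j _ _ => hw i j
  calc ∑ i ∈ (Ioi a)ᶜ, ∑ k ∈ Ioi a, w i k
      ≤ ∑ i ∈ (Ioi a)ᶜ, ∑ j ∈ Ioi i, w i j := sum_le_sum hinner
    _ ≤ ∑ i, ∑ j ∈ Ioi i, w i j :=
        sum_le_sum_of_subset_of_nonneg (subset_univ _) fun i _ _ =>
          sum_nonneg fun j _ => hw i j

theorem stmt_17_general (d : ℕ) (n : Fin (d+1) → ℕ)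
    (hn : ∃ j, n j = 0)
    (μ : Fin (d+1) → ℤ)
    (hμ : ∀ k : Fin (d+1), μ k = (n (k - 1) : ℤ) - (n k : ℤ))
    (m : Fin (d+1) → Fin (d+1) → ℕ)
    (hm : ∀ k, μ k = (∑ j ∈ Finset.univ.filter (fun j => j ≠ k), (m k j : ℤ)) -
        ∑ i ∈ Finset.univ.filter (fun i => i ≠ k), (m i k : ℤ)) :
    n (Fin.last d) ≤ ∑ i : Fin (d+1), ∑ j ∈ Finset.univ.filter (fun j => i < j), m i j := by
  obtain ⟨j₀, hj₀⟩ := hn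
  set w : Fin (d + 1) → Fin (d + 1) → ℤ := fun i j => m i j
  have hw : 0 ≤ w := fun i j => Int.natCast_nonneg (m i j)
  have hμw : ∀ k, μ k = netFlow w k := fun k =>
    (hm k).trans (netFlow_eq_sum_ne_sub_sum_ne w k).symm
  have htelescope : (n (Fin.last d) : ℤ) = -∑ k ∈ Ioi j₀, μ k := by
    simpa [hμ, hj₀] using (Fin.sum_Ioi_sub_sub_one (fun k => (n k : ℤ)) j₀).symm
  have hbound : (n (Fin.last d) : ℤ) ≤ ∑ i, ∑ j ∈ Ioi i, w i j :=
    calc (n (Fin.last d) : ℤ)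
        = -∑ k ∈ Ioi j₀, netFlow w k := by simp only [htelescope, hμw]
      _ ≤ ∑ i ∈ (Ioi j₀)ᶜ, ∑ k ∈ Ioi j₀, w i k := neg_sum_netFlow_le hw _
      _ ≤ ∑ i, ∑ j ∈ Ioi i, w i j := sum_compl_Ioi_sum_Ioi_le hw j₀
  simp only [filter_lt_eq_Ioi]
  rw [← Nat.cast_le (α := ℤ)]
  push_cast
  exact hbound

/-- If μ = Σ_k n(k)·α_k with n(k) ≥ 0 and some n(j) = 0 (so that
μ(k) = n((k−1) mod (d+1)) − n(k)), then any expression μ = Σ_{i≠j} m_{ij}(ε_i − ε_j)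
with nonnegative integers m_{ij} satisfies Σ_{i<j} m_{ij} ≥ n(d) = ℓ(μ). -/
theorem stmt_17 (d : ℕ) (hd : 1 ≤ d) (n : Fin (d+1) → ℕ)
    (hn : ∃ j, n j = 0)
    (μ : Fin (d+1) → ℤ)
    (hμ : ∀ k : Fin (d+1), μ k = (n (k - 1) : ℤ) - (n k : ℤ))
    (m : Fin (d+1) → Fin (d+1) → ℕ)
    (hm : ∀ k, μ k = (∑ j ∈ Finset.univ.filter (fun j => j ≠ k), (m k j : ℤ)) -
        ∑ i ∈ Finset.univ.filter (fun i => i ≠ k), (m i k : ℤ)) :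
    n (Fin.last d) ≤ ∑ i : Fin (d+1), ∑ j ∈ Finset.univ.filter (fun j => i < j), m i j :=
  stmt_17_general d n hn μ hμ m hm
end
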